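/- arXiv:math/0610223 — 6 statements merged into one kernel-verified Lean document; each statement's English description precedes it below -/
import Mathlib

section
/- For every function u in the Schwartz class on ℝ², the anisotropic Sobolev inequality ‖u‖_{L⁶(ℝ²)}⁶ ≤ 16 ‖u_x‖_{L²(ℝ²)}⁴ ‖∂_x⁻¹u_y‖_{L²(ℝ²)}² holds, where ∂_x⁻¹u_y denotes a function v with v_x = u_y. -/
open MeasureTheory

/-- Partial derivative in the first (x) variable. -/
noncomputable def pX (f : ℝ × ℝ → ℝ) : ℝ × ℝ → ℝ := fun p => fderiv ℝ f p (1, 0)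

/-- Partial derivative in the second (y) variable. -/
noncomputable def pY (f : ℝ × ℝ → ℝ) : ℝ × ℝ → ℝ := fun p => fderiv ℝ f p (0, 1)

namespace AnisoAux

open Filter Set Topology

variable {E : Type*} [NormedAddCommGroup E] [NormedSpace ℝ E]

lemma schwartz_htg (f : SchwartzMap E ℝ) : Function.HasTemperateGrowth ⇑f := by
  refine ⟨f.smooth', fun n => ⟨0, SchwartzMap.seminorm ℝ 0 n f, fun x => ?_⟩⟩
  simpa using SchwartzMap.norm_iteratedFDeriv_le_seminorm (𝕜 := ℝ) f n x

noncomputable def mulS (f g : SchwartzMap E ℝ) : SchwartzMap E ℝ :=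
  SchwartzMap.bilinLeftCLM (ContinuousLinearMap.mul ℝ ℝ) (schwartz_htg g) f

@[simp] lemma mulS_apply (f g : SchwartzMap E ℝ) (x : E) : mulS f g x = f x * g x := rfl

lemma tendsto_atBot_zero (f : SchwartzMap ℝ ℝ) : Tendsto (⇑f) atBot (𝓝 0) :=
  (zero_at_infty f).mono_left atBot_le_cocompact

lemma tendsto_atTop_zero (f : SchwartzMap ℝ ℝ) : Tendsto (⇑f) atTop (𝓝 0) :=
  (zero_at_infty f).mono_left atTop_le_cocompact

lemma htg_mkX (y : ℝ) : Function.HasTemperateGrowth (fun x : ℝ => ((x, y) : ℝ × ℝ)) := by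
  refine Function.HasTemperateGrowth.of_fderiv (k := 1) (C := 1 + |y|) ?_ ?_ ?_
  · have h : (fderiv ℝ (fun x : ℝ => ((x, y) : ℝ × ℝ)))
        = fun _ => ((ContinuousLinearMap.id ℝ ℝ).prod (0 : ℝ →L[ℝ] ℝ)) := by
      funext t
      have h2 : HasFDerivAt (fun x : ℝ => ((x, y) : ℝ × ℝ))
          ((ContinuousLinearMap.id ℝ ℝ).prod (0 : ℝ →L[ℝ] ℝ)) t :=
        (hasFDerivAt_id t).prodMk (hasFDerivAt_const y t)
      exact h2.fderiv
    rw [h]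
    exact Function.HasTemperateGrowth.const _
  · exact fun t => ((hasFDerivAt_id t).prodMk (hasFDerivAt_const y t)).differentiableAt
  · intro t
    have h1 : ‖((t, y) : ℝ × ℝ)‖ = max ‖t‖ ‖y‖ := rfl
    rw [h1]
    simp only [Real.norm_eq_abs, pow_one]
    refine max_le ?_ ?_ <;> nlinarith [abs_nonneg t, abs_nonneg y]

lemma htg_mkY (x : ℝ) : Function.HasTemperateGrowth (fun y : ℝ => ((x, y) : ℝ × ℝ)) := by
  refine Function.HasTemperateGrowth.of_fderiv (k := 1) (C := 1 + |x|) ?_ ?_ ?_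
  · have h : (fderiv ℝ (fun y : ℝ => ((x, y) : ℝ × ℝ)))
        = fun _ => ((0 : ℝ →L[ℝ] ℝ).prod (ContinuousLinearMap.id ℝ ℝ)) := by
      funext t
      have h2 : HasFDerivAt (fun y : ℝ => ((x, y) : ℝ × ℝ))
          ((0 : ℝ →L[ℝ] ℝ).prod (ContinuousLinearMap.id ℝ ℝ)) t :=
        (hasFDerivAt_const x t).prodMk (hasFDerivAt_id t)
      exact h2.fderiv
    rw [h]
    exact Function.HasTemperateGrowth.const _
  · exact fun t => ((hasFDerivAt_const x t).prodMk (hasFDerivAt_id t)).differentiableAt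
  · intro t
    have h1 : ‖((x, t) : ℝ × ℝ)‖ = max ‖x‖ ‖t‖ := rfl
    rw [h1]
    simp only [Real.norm_eq_abs, pow_one]
    refine max_le ?_ ?_ <;> nlinarith [abs_nonneg t, abs_nonneg x]

/-- Restriction of a Schwartz function on `ℝ²` to a horizontal line. -/
noncomputable def rX (y : ℝ) : SchwartzMap (ℝ × ℝ) ℝ →L[ℝ] SchwartzMap ℝ ℝ :=
  SchwartzMap.compCLM ℝ (htg_mkX y) ⟨1, 1, fun t => by
    have h1 : ‖((t, y) : ℝ × ℝ)‖ = max ‖t‖ ‖y‖ := rfl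
    rw [h1]
    simp only [Real.norm_eq_abs, pow_one]
    nlinarith [le_max_left |t| |y|, abs_nonneg y, abs_nonneg t]⟩

@[simp] lemma rX_apply (y : ℝ) (f : SchwartzMap (ℝ × ℝ) ℝ) (x : ℝ) : rX y f x = f (x, y) := rfl

/-- Restriction of a Schwartz function on `ℝ²` to a vertical line. -/
noncomputable def rY (x : ℝ) : SchwartzMap (ℝ × ℝ) ℝ →L[ℝ] SchwartzMap ℝ ℝ :=
  SchwartzMap.compCLM ℝ (htg_mkY x) ⟨1, 1, fun t => by
    have h1 : ‖((x, t) : ℝ × ℝ)‖ = max ‖x‖ ‖t‖ := rfl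
    rw [h1]
    simp only [Real.norm_eq_abs, pow_one]
    nlinarith [le_max_right |x| |t|, abs_nonneg x, abs_nonneg t]⟩

@[simp] lemma rY_apply (x : ℝ) (f : SchwartzMap (ℝ × ℝ) ℝ) (y : ℝ) : rY x f y = f (x, y) := rfl

lemma hasDerivAt_X (f : SchwartzMap (ℝ × ℝ) ℝ) (y x : ℝ) :
    HasDerivAt (fun t => f (t, y)) (pX (⇑f) (x, y)) x := by
  have h1 : HasDerivAt (fun t : ℝ => ((t, y) : ℝ × ℝ)) ((1 : ℝ), (0 : ℝ)) x :=
    (hasDerivAt_id x).prodMk (hasDerivAt_const x y)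
  have h2 := (f.differentiableAt (x := (x, y))).hasFDerivAt
  simpa [pX, Function.comp_def] using h2.comp_hasDerivAt x h1

lemma hasDerivAt_Y (f : SchwartzMap (ℝ × ℝ) ℝ) (x y : ℝ) :
    HasDerivAt (fun t => f (x, t)) (pY (⇑f) (x, y)) y := by
  have h1 : HasDerivAt (fun t : ℝ => ((x, t) : ℝ × ℝ)) ((0 : ℝ), (1 : ℝ)) y :=
    (hasDerivAt_const y x).prodMk (hasDerivAt_id y)
  have h2 := (f.differentiableAt (x := (x, y))).hasFDerivAt
  simpa [pY, Function.comp_def] using h2.comp_hasDerivAt y h1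

lemma sq_eq_integral_Iic (f g : SchwartzMap ℝ ℝ) (hd : ∀ x, HasDerivAt f (g x) x) (a : ℝ) :
    (f a) ^ 2 = ∫ x in Iic a, 2 * (f x * g x) := by
  have hderiv : ∀ x ∈ Iic a, HasDerivAt (fun t => (f t) ^ 2) (2 * (f x * g x)) x := by
    intro x _
    have h := (hd x).pow 2
    norm_num at h
    have e : 2 * (f x * g x) = 2 * f x * g x := by ring
    rw [e]; exact h
  have hint : IntegrableOn (fun x => 2 * (f x * g x)) (Iic a) volume :=
    ((mulS f g).integrable.const_mul 2).integrableOn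
  have hlim : Tendsto (fun t => (f t) ^ 2) atBot (𝓝 0) := by
    have h2 : (fun t => (f t) ^ 2) = ⇑(mulS f f) := by funext t; simp [sq]
    rw [h2]
    exact tendsto_atBot_zero (mulS f f)
  have := integral_Iic_of_hasDerivAt_of_tendsto' hderiv hint hlim
  rw [this]; ring

lemma sq_le_two_integral (f g : SchwartzMap ℝ ℝ) (hd : ∀ x, HasDerivAt f (g x) x) (a : ℝ) :
    (f a) ^ 2 ≤ 2 * ∫ x, |f x * g x| := by
  rw [sq_eq_integral_Iic f g hd a]
  have habs : Integrable (fun x => |f x * g x|) volume := (mulS f g).integrable.abs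
  have h1 : ∫ x in Iic a, 2 * (f x * g x) ≤ ∫ x in Iic a, 2 * |f x * g x| := by
    refine integral_mono ((mulS f g).integrable.const_mul 2).integrableOn
      (habs.const_mul 2).integrableOn fun x => ?_
    have := le_abs_self (f x * g x)
    dsimp only
    linarith
  have h2 : ∫ x in Iic a, 2 * |f x * g x| ≤ ∫ x, 2 * |f x * g x| :=
    setIntegral_le_integral (habs.const_mul 2)
      (Eventually.of_forall fun x => by positivity)
  calc ∫ x in Iic a, 2 * (f x * g x) ≤ ∫ x, 2 * |f x * g x| := le_trans h1 h2
    _ = 2 * ∫ x, |f x * g x| := integral_const_mul 2 _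

lemma integral_parts (F F' G G' : SchwartzMap ℝ ℝ) (hF : ∀ x, HasDerivAt F (F' x) x)
    (hG : ∀ x, HasDerivAt G (G' x) x) :
    ∫ x, F x * G' x = - ∫ x, F' x * G x := by
  have hd : ∀ x, HasDerivAt (fun t => F t * G t) (F' x * G x + F x * G' x) x :=
    fun x => (hF x).mul (hG x)
  have hint : Integrable (fun x => F' x * G x + F x * G' x) volume :=
    (mulS F' G).integrable.add (mulS F G').integrable
  have hprod : (fun t => F t * G t) = ⇑(mulS F G) := by funext t; simp
  have hbot : Tendsto (fun t => F t * G t) atBot (𝓝 0) := by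
    rw [hprod]; exact tendsto_atBot_zero _
  have htop : Tendsto (fun t => F t * G t) atTop (𝓝 0) := by
    rw [hprod]; exact tendsto_atTop_zero _
  have h1 : ∫ x in Iic (0:ℝ), (F' x * G x + F x * G' x) = F 0 * G 0 - 0 :=
    integral_Iic_of_hasDerivAt_of_tendsto' (fun x _ => hd x) hint.integrableOn hbot
  have h2 : ∫ x in Ioi (0:ℝ), (F' x * G x + F x * G' x) = 0 - F 0 * G 0 :=
    integral_Ioi_of_hasDerivAt_of_tendsto' (fun x _ => hd x) hint.integrableOn htop
  have h3 := intervalIntegral.integral_Iic_add_Ioi (b := (0:ℝ))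
    hint.integrableOn hint.integrableOn
  have h4 : ∫ x, (F' x * G x + F x * G' x) = 0 := by rw [← h3, h1, h2]; ring
  have hi1 : Integrable (fun x => F' x * G x) volume := (mulS F' G).integrable
  have hi2 : Integrable (fun x => F x * G' x) volume := (mulS F G').integrable
  rw [integral_add hi1 hi2] at h4
  linarith

lemma cs_sq {α : Type*} [MeasurableSpace α] {μ : Measure α} {f g : α → ℝ}
    (hf : Integrable (fun x => f x ^ 2) μ) (hg : Integrable (fun x => g x ^ 2) μ)
    (hfg : Integrable (fun x => |f x * g x|) μ) :
    (∫ x, |f x * g x| ∂μ) ^ 2 ≤ (∫ x, f x ^ 2 ∂μ) * (∫ x, g x ^ 2 ∂μ) := by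
  set K := ∫ x, |f x * g x| ∂μ with hKdef
  set P := ∫ x, f x ^ 2 ∂μ with hPdef
  set Q := ∫ x, g x ^ 2 ∂μ with hQdef
  have hK0 : 0 ≤ K := integral_nonneg fun x => abs_nonneg _
  have hP0 : 0 ≤ P := integral_nonneg fun x => sq_nonneg _
  have hQ0 : 0 ≤ Q := integral_nonneg fun x => sq_nonneg _
  have key : ∀ t : ℝ, 0 < t → 2 * t * K ≤ t ^ 2 * P + Q := by
    intro t ht
    have hpt : ∀ x, 2 * t * |f x * g x| ≤ t ^ 2 * f x ^ 2 + g x ^ 2 := by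
      intro x
      have h1 := sq_nonneg (t * |f x| - |g x|)
      have h2 : |f x| ^ 2 = f x ^ 2 := sq_abs _
      have h3 : |g x| ^ 2 = g x ^ 2 := sq_abs _
      rw [abs_mul]
      nlinarith [abs_nonneg (f x), abs_nonneg (g x)]
    have hmono : ∫ x, 2 * t * |f x * g x| ∂μ ≤ ∫ x, (t ^ 2 * f x ^ 2 + g x ^ 2) ∂μ :=
      integral_mono (hfg.const_mul (2 * t)) ((hf.const_mul (t ^ 2)).add hg) hpt
    rw [integral_const_mul, integral_add (hf.const_mul (t ^ 2)) hg, integral_const_mul] at hmono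
    linarith
  have main : ∀ ε : ℝ, 0 < ε → K ^ 2 ≤ (P + ε) * (Q + ε) := by
    intro ε hε
    set s := Real.sqrt (P + ε) with hsdef
    set r := Real.sqrt (Q + ε) with hrdef
    have hs : 0 < s := Real.sqrt_pos.2 (by linarith)
    have hr : 0 < r := Real.sqrt_pos.2 (by linarith)
    have hs2 : s ^ 2 = P + ε := Real.sq_sqrt (by linarith)
    have hr2 : r ^ 2 = Q + ε := Real.sq_sqrt (by linarith)
    set t := r / s with htdef
    have ht : 0 < t := div_pos hr hs
    have hst : s * t = r := by rw [htdef]; field_simp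
    have hst2 : r ^ 2 = s ^ 2 * t ^ 2 := by rw [← hst]; ring
    have e1 : t ^ 2 * P + Q ≤ 2 * t ^ 2 * s ^ 2 := by nlinarith [sq_nonneg t]
    have e2 : K ≤ t * s ^ 2 := by nlinarith [key t ht]
    have e3 : K ^ 2 ≤ (t * s ^ 2) ^ 2 := by nlinarith
    have e4 : (t * s ^ 2) ^ 2 = (P + ε) * (Q + ε) := by
      rw [← hs2, ← hr2, hst2]; ring
    linarith
  refine le_of_forall_pos_le_add fun δ hδ => ?_
  have hden : (0:ℝ) < P + Q + 2 := by linarith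
  set ε := min 1 (δ / (P + Q + 2)) with hεdef
  have hε0 : 0 < ε := lt_min one_pos (div_pos hδ hden)
  have h1 : ε ≤ 1 := min_le_left _ _
  have h2 : ε ≤ δ / (P + Q + 2) := min_le_right _ _
  have h3 : ε * (P + Q + 2) ≤ δ := by
    rw [← le_div_iff₀ hden]; exact h2
  have := main ε hε0
  nlinarith [hε0.le]

end AnisoAux

set_option maxHeartbeats 2000000 in
open AnisoAux Filter Set Topology in
/-- Anisotropic Sobolev inequality:
`‖u‖_{L⁶}⁶ ≤ 16 ‖u_x‖_{L²}⁴ ‖∂_x⁻¹ u_y‖_{L²}²` for Schwartz `u`,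
where `v = ∂_x⁻¹ u_y` satisfies `v_x = u_y`. -/
theorem stmt0 (u v : SchwartzMap (ℝ × ℝ) ℝ)
    (hv : ∀ p, pX (⇑v) p = pY (⇑u) p) :
    (∫ p : ℝ × ℝ, (u p) ^ 6) ≤
      16 * (∫ p : ℝ × ℝ, (pX (⇑u) p) ^ 2) ^ 2 * ∫ p : ℝ × ℝ, (v p) ^ 2 := by
  -- Schwartz representatives of the partial derivatives
  set uX : SchwartzMap (ℝ × ℝ) ℝ :=
    SchwartzMap.evalCLM (𝕜 := ℝ) (ℝ × ℝ) ℝ (((1:ℝ), (0:ℝ)) : ℝ × ℝ) (SchwartzMap.fderivCLM ℝ (ℝ × ℝ) ℝ u) with huXdef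
  set uY : SchwartzMap (ℝ × ℝ) ℝ :=
    SchwartzMap.evalCLM (𝕜 := ℝ) (ℝ × ℝ) ℝ (((0:ℝ), (1:ℝ)) : ℝ × ℝ) (SchwartzMap.fderivCLM ℝ (ℝ × ℝ) ℝ u) with huYdef
  set vX : SchwartzMap (ℝ × ℝ) ℝ :=
    SchwartzMap.evalCLM (𝕜 := ℝ) (ℝ × ℝ) ℝ (((1:ℝ), (0:ℝ)) : ℝ × ℝ) (SchwartzMap.fderivCLM ℝ (ℝ × ℝ) ℝ v) with hvXdef
  have huXc : ∀ p, uX p = pX (⇑u) p := fun p => rfl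
  have huYc : ∀ p, uY p = pY (⇑u) p := fun p => rfl
  have hvXc : ∀ p, vX p = pX (⇑v) p := fun p => rfl
  have hvY : ∀ p, uY p = pX (⇑v) p := fun p => ((hv p).trans (huYc p).symm).symm
  -- Fubini helpers
  have fub : ∀ W : ℝ × ℝ → ℝ, Integrable W (volume : Measure (ℝ × ℝ)) →
      ∫ p : ℝ × ℝ, W p = ∫ y : ℝ, ∫ x : ℝ, W (x, y) := by
    intro W hW
    rw [Measure.volume_eq_prod] at hW
    rw [show (volume : Measure (ℝ × ℝ)) = (volume : Measure ℝ).prod volume from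
      Measure.volume_eq_prod ℝ ℝ]
    exact integral_prod_symm W hW
  have fubInt : ∀ W : ℝ × ℝ → ℝ, Integrable W (volume : Measure (ℝ × ℝ)) →
      Integrable (fun y : ℝ => ∫ x : ℝ, W (x, y)) (volume : Measure ℝ) := by
    intro W hW
    rw [Measure.volume_eq_prod] at hW
    exact hW.integral_prod_right
  -- 2D integrability facts
  have hu6Int : Integrable (fun p : ℝ × ℝ => (u p) ^ 6) (volume : Measure (ℝ × ℝ)) := by
    refine ((mulS (mulS (mulS u u) (mulS u u)) (mulS u u)).integrable (μ := volume)).congr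
      (Filter.Eventually.of_forall fun p => ?_)
    simp only [mulS_apply]; ring
  have hx2Int : Integrable (fun p : ℝ × ℝ => (pX (⇑u) p) ^ 2) (volume : Measure (ℝ × ℝ)) := by
    refine ((mulS uX uX).integrable (μ := volume)).congr
      (Filter.Eventually.of_forall fun p => ?_)
    simp only [mulS_apply, huXc]; ring
  have hv2Int : Integrable (fun p : ℝ × ℝ => (v p) ^ 2) (volume : Measure (ℝ × ℝ)) := by
    refine ((mulS v v).integrable (μ := volume)).congr
      (Filter.Eventually.of_forall fun p => ?_)
    simp only [mulS_apply]; ring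
  have hxvInt : Integrable (fun p : ℝ × ℝ => |pX (⇑u) p * v p|) (volume : Measure (ℝ × ℝ)) := by
    refine ((mulS uX v).integrable (μ := volume)).abs.congr
      (Filter.Eventually.of_forall fun p => ?_)
    simp only [mulS_apply, huXc]
  have hxvInt' : Integrable (fun p : ℝ × ℝ => pX (⇑u) p * v p) (volume : Measure (ℝ × ℝ)) := by
    refine ((mulS uX v).integrable (μ := volume)).congr
      (Filter.Eventually.of_forall fun p => ?_)
    simp only [mulS_apply, huXc]
  -- global Cauchy-Schwarz for u_x and v
  have hJsq : (∫ p : ℝ × ℝ, |pX (⇑u) p * v p|) ^ 2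
      ≤ (∫ p : ℝ × ℝ, (pX (⇑u) p) ^ 2) * ∫ p : ℝ × ℝ, (v p) ^ 2 :=
    cs_sq (f := fun p : ℝ × ℝ => pX (⇑u) p) (g := fun p : ℝ × ℝ => v p) hx2Int hv2Int hxvInt
  have hJ0 : 0 ≤ ∫ p : ℝ × ℝ, |pX (⇑u) p * v p| :=
    integral_nonneg fun p => abs_nonneg _
  have hA20 : 0 ≤ ∫ p : ℝ × ℝ, (pX (⇑u) p) ^ 2 := integral_nonneg fun p => sq_nonneg _
  have hB20 : 0 ≤ ∫ p : ℝ × ℝ, (v p) ^ 2 := integral_nonneg fun p => sq_nonneg _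
  -- the key slice-wise estimate
  have key : ∀ y : ℝ, (∫ x : ℝ, (u (x, y)) ^ 6)
      ≤ (16 * ((∫ p : ℝ × ℝ, (pX (⇑u) p) ^ 2) * ∫ p : ℝ × ℝ, (v p) ^ 2))
        * ∫ x : ℝ, (pX (⇑u) (x, y)) ^ 2 := by
    intro y
    -- 1D integrability facts on the slice
    have hu2y : Integrable (fun x : ℝ => (u (x, y)) ^ 2) volume := by
      refine ((mulS (rX y u) (rX y u)).integrable (μ := volume)).congr
        (Filter.Eventually.of_forall fun x => ?_)
      simp only [mulS_apply, rX_apply]; ring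
    have hx2y : Integrable (fun x : ℝ => (pX (⇑u) (x, y)) ^ 2) volume := by
      refine ((mulS (rX y uX) (rX y uX)).integrable (μ := volume)).congr
        (Filter.Eventually.of_forall fun x => ?_)
      simp only [mulS_apply, rX_apply, huXc]; ring
    have huxy : Integrable (fun x : ℝ => |u (x, y) * pX (⇑u) (x, y)|) volume := by
      refine ((mulS (rX y u) (rX y uX)).integrable (μ := volume)).abs.congr
        (Filter.Eventually.of_forall fun x => ?_)
      simp only [mulS_apply, rX_apply, huXc]
    have hu6y : Integrable (fun x : ℝ => (u (x, y)) ^ 6) volume := by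
      refine ((mulS (mulS (mulS (rX y u) (rX y u)) (mulS (rX y u) (rX y u)))
        (mulS (rX y u) (rX y u))).integrable (μ := volume)).congr
        (Filter.Eventually.of_forall fun x => ?_)
      simp only [mulS_apply, rX_apply]; ring
    have hIy0 : 0 ≤ ∫ x : ℝ, |u (x, y) * pX (⇑u) (x, y)| :=
      integral_nonneg fun x => abs_nonneg _
    have hc0 : 0 ≤ ∫ x : ℝ, (u (x, y)) ^ 2 := integral_nonneg fun x => sq_nonneg _
    have ha0 : 0 ≤ ∫ x : ℝ, (pX (⇑u) (x, y)) ^ 2 := integral_nonneg fun x => sq_nonneg _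
    -- Step 1: pointwise bound via FTC in x
    have step1 : ∀ x : ℝ, (u (x, y)) ^ 2 ≤ 2 * ∫ x' : ℝ, |u (x', y) * pX (⇑u) (x', y)| := by
      intro x
      have hd : ∀ t : ℝ, HasDerivAt (⇑(rX y u)) ((rX y uX) t) t := fun t => hasDerivAt_X u y t
      have h := sq_le_two_integral (rX y u) (rX y uX) hd x
      simpa only [rX_apply, huXc] using h
    -- Step 2: Cauchy-Schwarz on the slice
    have step2 : (∫ x : ℝ, |u (x, y) * pX (⇑u) (x, y)|) ^ 2
        ≤ (∫ x : ℝ, (u (x, y)) ^ 2) * ∫ x : ℝ, (pX (⇑u) (x, y)) ^ 2 :=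
      cs_sq (f := fun x : ℝ => u (x, y)) (g := fun x : ℝ => pX (⇑u) (x, y)) hu2y hx2y huxy
    -- Step 3: the L² mass of the slice is uniformly controlled
    have hc2 : (∫ x : ℝ, (u (x, y)) ^ 2) ≤ 2 * ∫ p : ℝ × ℝ, |pX (⇑u) p * v p| := by
      have hWint : Integrable (fun p : ℝ × ℝ => 2 * (u p * uY p)) (volume : Measure (ℝ × ℝ)) :=
        ((mulS u uY).integrable (μ := volume)).const_mul 2
      have heq1 : ∀ x : ℝ, (u (x, y)) ^ 2 = ∫ t in Set.Iic y, 2 * (u (x, t) * uY (x, t)) := by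
        intro x
        have hd : ∀ t : ℝ, HasDerivAt (⇑(rY x u)) ((rY x uY) t) t := fun t => hasDerivAt_Y u x t
        have h := sq_eq_integral_Iic (rY x u) (rY x uY) hd y
        simpa only [rY_apply] using h
      have hc2a : (∫ x : ℝ, (u (x, y)) ^ 2)
          = ∫ x : ℝ, ∫ t in Set.Iic y, 2 * (u (x, t) * uY (x, t)) :=
        integral_congr_ae (Filter.Eventually.of_forall fun x => heq1 x)
      have hmeasEq : (volume : Measure ℝ).prod (volume.restrict (Set.Iic y))
          = ((volume : Measure (ℝ × ℝ))).restrict (Set.univ ×ˢ Set.Iic y) := by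
        rw [Measure.volume_eq_prod, ← Measure.prod_restrict, Measure.restrict_univ]
      have hintR : Integrable (Function.uncurry fun x t : ℝ => 2 * (u (x, t) * uY (x, t)))
          ((volume : Measure ℝ).prod (volume.restrict (Set.Iic y))) := by
        rw [hmeasEq]
        exact hWint.restrict
      have hswap : (∫ x : ℝ, ∫ t in Set.Iic y, 2 * (u (x, t) * uY (x, t)))
          = ∫ t in Set.Iic y, ∫ x : ℝ, 2 * (u (x, t) * uY (x, t)) :=
        integral_integral_swap hintR
      have hparts : ∀ t : ℝ, (∫ x : ℝ, 2 * (u (x, t) * uY (x, t)))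
          = -2 * ∫ x : ℝ, pX (⇑u) (x, t) * v (x, t) := by
        intro t
        have hdF : ∀ s : ℝ, HasDerivAt (⇑(rX t u)) ((rX t uX) s) s := fun s => hasDerivAt_X u t s
        have hdG : ∀ s : ℝ, HasDerivAt (⇑(rX t v)) ((rX t vX) s) s := fun s => hasDerivAt_X v t s
        have h := integral_parts (rX t u) (rX t uX) (rX t v) (rX t vX) hdF hdG
        have h2 : (∫ x : ℝ, u (x, t) * uY (x, t)) = - ∫ x : ℝ, pX (⇑u) (x, t) * v (x, t) := by
          have e : (fun x : ℝ => u (x, t) * uY (x, t))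
              = fun x : ℝ => (rX t u) x * (rX t vX) x := by
            funext s
            simp only [rX_apply]
            rw [hvY, hvXc]
          rw [e]
          simpa only [rX_apply, huXc] using h
        rw [integral_const_mul 2 (fun x : ℝ => u (x, t) * uY (x, t)), h2]
        ring
      have hc2b : (∫ x : ℝ, (u (x, y)) ^ 2)
          = -2 * ∫ t in Set.Iic y, ∫ x : ℝ, pX (⇑u) (x, t) * v (x, t) := by
        rw [hc2a, hswap,
          integral_congr_ae (Filter.Eventually.of_forall fun t => hparts t),
          integral_const_mul (-2 : ℝ) (fun t : ℝ => ∫ x : ℝ, pX (⇑u) (x, t) * v (x, t))]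
      have hprodInt : Integrable (fun p : ℝ × ℝ => pX (⇑u) p * v p)
          ((volume : Measure ℝ).prod volume) := by
        rw [← Measure.volume_eq_prod]; exact hxvInt'
      have hhInt : Integrable (fun t : ℝ => ∫ x : ℝ, pX (⇑u) (x, t) * v (x, t)) volume :=
        hprodInt.integral_prod_right
      have hHInt : Integrable (fun t : ℝ => ∫ x : ℝ, |pX (⇑u) (x, t) * v (x, t)|) volume := by
        have := hprodInt.integral_norm_prod_right
        simpa only [Real.norm_eq_abs] using this
      have habs : ∀ t : ℝ, |∫ x : ℝ, pX (⇑u) (x, t) * v (x, t)|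
          ≤ ∫ x : ℝ, |pX (⇑u) (x, t) * v (x, t)| := fun t => by
        simpa only [Real.norm_eq_abs] using
          norm_integral_le_integral_norm (fun x : ℝ => pX (⇑u) (x, t) * v (x, t))
      have hS1 : |∫ t in Set.Iic y, ∫ x : ℝ, pX (⇑u) (x, t) * v (x, t)|
          ≤ ∫ t in Set.Iic y, |∫ x : ℝ, pX (⇑u) (x, t) * v (x, t)| := by
        simpa only [Real.norm_eq_abs] using
          norm_integral_le_integral_norm (μ := volume.restrict (Set.Iic y))
            (fun t : ℝ => ∫ x : ℝ, pX (⇑u) (x, t) * v (x, t))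
      have hS2 : (∫ t in Set.Iic y, |∫ x : ℝ, pX (⇑u) (x, t) * v (x, t)|)
          ≤ ∫ t in Set.Iic y, ∫ x : ℝ, |pX (⇑u) (x, t) * v (x, t)| :=
        integral_mono hhInt.abs.integrableOn hHInt.integrableOn habs
      have hS3 : (∫ t in Set.Iic y, ∫ x : ℝ, |pX (⇑u) (x, t) * v (x, t)|)
          ≤ ∫ t : ℝ, ∫ x : ℝ, |pX (⇑u) (x, t) * v (x, t)| :=
        setIntegral_le_integral hHInt
          (Filter.Eventually.of_forall fun t => integral_nonneg fun x => abs_nonneg _)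
      have hS4 : (∫ t : ℝ, ∫ x : ℝ, |pX (⇑u) (x, t) * v (x, t)|)
          = ∫ p : ℝ × ℝ, |pX (⇑u) p * v p| := (fub _ hxvInt).symm
      have hneg : -(∫ t in Set.Iic y, ∫ x : ℝ, pX (⇑u) (x, t) * v (x, t))
          ≤ |∫ t in Set.Iic y, ∫ x : ℝ, pX (⇑u) (x, t) * v (x, t)| := neg_le_abs _
      rw [hc2b]
      linarith
    -- Step 4: integrate the pointwise sixth-power bound over the slice
    have hptw : ∀ x : ℝ, (u (x, y)) ^ 6
        ≤ (4 * (∫ x' : ℝ, |u (x', y) * pX (⇑u) (x', y)|) ^ 2) * (u (x, y)) ^ 2 := by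
      intro x
      have h1 := step1 x
      have h4 : (u (x, y)) ^ 2 * (u (x, y)) ^ 2
          ≤ (2 * ∫ x' : ℝ, |u (x', y) * pX (⇑u) (x', y)|)
            * (2 * ∫ x' : ℝ, |u (x', y) * pX (⇑u) (x', y)|) :=
        mul_le_mul h1 h1 (sq_nonneg _) (by linarith)
      have h5 := mul_le_mul_of_nonneg_right h4 (sq_nonneg (u (x, y)))
      calc (u (x, y)) ^ 6
          = (u (x, y)) ^ 2 * (u (x, y)) ^ 2 * (u (x, y)) ^ 2 := by ring
        _ ≤ (2 * ∫ x' : ℝ, |u (x', y) * pX (⇑u) (x', y)|)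
            * (2 * ∫ x' : ℝ, |u (x', y) * pX (⇑u) (x', y)|) * (u (x, y)) ^ 2 := h5
        _ = (4 * (∫ x' : ℝ, |u (x', y) * pX (⇑u) (x', y)|) ^ 2) * (u (x, y)) ^ 2 := by ring
    have hI6 : (∫ x : ℝ, (u (x, y)) ^ 6)
        ≤ (4 * (∫ x' : ℝ, |u (x', y) * pX (⇑u) (x', y)|) ^ 2) * ∫ x : ℝ, (u (x, y)) ^ 2 := by
      have h := integral_mono hu6y
        (hu2y.const_mul (4 * (∫ x' : ℝ, |u (x', y) * pX (⇑u) (x', y)|) ^ 2)) hptw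
      rwa [integral_const_mul] at h
    -- combine
    have e2 : (∫ x : ℝ, (u (x, y)) ^ 2) * (∫ x : ℝ, (u (x, y)) ^ 2)
        ≤ (2 * ∫ p : ℝ × ℝ, |pX (⇑u) p * v p|) * (2 * ∫ p : ℝ × ℝ, |pX (⇑u) p * v p|) :=
      mul_le_mul hc2 hc2 hc0 (by linarith)
    have f1 := mul_le_mul_of_nonneg_right step2 hc0
    have f3 : (∫ x : ℝ, (u (x, y)) ^ 2) * (∫ x : ℝ, (u (x, y)) ^ 2)
        ≤ 4 * (∫ p : ℝ × ℝ, |pX (⇑u) p * v p|) ^ 2 := by nlinarith [e2]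
    have f4 := mul_le_mul_of_nonneg_left f3 ha0
    have f5 := mul_le_mul_of_nonneg_left hJsq ha0
    nlinarith [hI6, f1, f4, f5]
  -- Step 5: integrate in y
  have hLHS : (∫ p : ℝ × ℝ, (u p) ^ 6) = ∫ y : ℝ, ∫ x : ℝ, (u (x, y)) ^ 6 := by
    have := fub (fun p : ℝ × ℝ => (u p) ^ 6) hu6Int
    simpa using this
  have hRHSa : (∫ y : ℝ, ∫ x : ℝ, (pX (⇑u) (x, y)) ^ 2) = ∫ p : ℝ × ℝ, (pX (⇑u) p) ^ 2 := by
    have := fub (fun p : ℝ × ℝ => (pX (⇑u) p) ^ 2) hx2Int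
    simpa using this.symm
  have hI6Int : Integrable (fun y : ℝ => ∫ x : ℝ, (u (x, y)) ^ 6) volume :=
    fubInt _ hu6Int
  have ha2Int : Integrable (fun y : ℝ => ∫ x : ℝ, (pX (⇑u) (x, y)) ^ 2) volume :=
    fubInt _ hx2Int
  have hmono := integral_mono hI6Int
    (ha2Int.const_mul (16 * ((∫ p : ℝ × ℝ, (pX (⇑u) p) ^ 2) * ∫ p : ℝ × ℝ, (v p) ^ 2))) key
  rw [integral_const_mul, hRHSa] at hmono
  rw [hLHS]
  calc (∫ y : ℝ, ∫ x : ℝ, (u (x, y)) ^ 6)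
      ≤ 16 * ((∫ p : ℝ × ℝ, (pX (⇑u) p) ^ 2) * ∫ p : ℝ × ℝ, (v p) ^ 2)
        * ∫ p : ℝ × ℝ, (pX (⇑u) p) ^ 2 := hmono
    _ = 16 * (∫ p : ℝ × ℝ, (pX (⇑u) p) ^ 2) ^ 2 * ∫ p : ℝ × ℝ, (v p) ^ 2 := by ring
end

section
/- For a fixed y, if u : ℝ² → ℝ is Schwartz, then sup_x |u(x,y)|⁴ ≤ 4 (∫ u_x(z,y)² dz)(∫ u(z,y)² dz). -/
open MeasureTheory Filter Topology

/-- For fixed `y`: `sup_x |u(x,y)|⁴ ≤ 4 (∫ u_x(z,y)² dz)(∫ u(z,y)² dz)`. -/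
theorem stmt2 (u : SchwartzMap (ℝ × ℝ) ℝ) (y : ℝ) (x : ℝ) :
    |u (x, y)| ^ 4 ≤
      4 * (∫ z : ℝ, (pX (⇑u) (z, y)) ^ 2) * ∫ z : ℝ, (u (z, y)) ^ 2 := by
  -- the embedding z ↦ (z, y)
  set g : ℝ → ℝ × ℝ := fun z => (z, y) with hgdef
  have hgdiff : ∀ z : ℝ, HasFDerivAt g (ContinuousLinearMap.inl ℝ ℝ ℝ) z := by
    intro z
    have h : g = fun z => (ContinuousLinearMap.inl ℝ ℝ ℝ) z + ((0 : ℝ), y) := by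
      funext w; simp [hgdef, Prod.ext_iff]
    rw [h]
    exact ((ContinuousLinearMap.inl ℝ ℝ ℝ).hasFDerivAt).add_const _
  have hiso : Isometry g := by
    apply Isometry.of_dist_eq
    intro a b
    rw [Prod.dist_eq]
    simp only [hgdef, dist_self]
    exact max_eq_left dist_nonneg
  have hg : Function.HasTemperateGrowth g := by
    apply Function.HasTemperateGrowth.of_fderiv (k := 1) (C := |y| + 1)
    · have h : (fderiv ℝ g) = fun _ => ContinuousLinearMap.inl ℝ ℝ ℝ := by
        funext z; exact (hgdiff z).fderiv
      rw [h]
      exact Function.HasTemperateGrowth.const _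
    · exact fun z => (hgdiff z).differentiableAt
    · intro z
      have h1 : ‖g z‖ = max ‖z‖ ‖y‖ := rfl
      rw [h1]
      have h2 : max ‖z‖ ‖y‖ ≤ ‖z‖ + |y| := by
        rw [max_le_iff]
        constructor
        · nlinarith [abs_nonneg y]
        · simp [Real.norm_eq_abs]
      calc max ‖z‖ ‖y‖ ≤ ‖z‖ + |y| := h2
        _ ≤ (|y| + 1) * (1 + ‖z‖) ^ 1 := by
            have := norm_nonneg z
            have := abs_nonneg y
            nlinarith
  -- the restricted Schwartz function
  set f : SchwartzMap ℝ ℝ := SchwartzMap.compCLMOfAntilipschitz ℝ hg hiso.antilipschitz u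
    with hfdef
  have hfapp : ∀ z, f z = u (z, y) := fun z => rfl
  set f' : SchwartzMap ℝ ℝ := SchwartzMap.derivCLM ℝ ℝ f with hf'def
  have hder : ∀ z, HasDerivAt f (pX (⇑u) (z, y)) z := by
    intro z
    have h1 : HasFDerivAt (⇑u) (fderiv ℝ (⇑u) (z, y)) (z, y) :=
      u.differentiableAt.hasFDerivAt
    have h2 := (h1.comp z (hgdiff z)).hasDerivAt
    have h3 : ⇑f = ⇑u ∘ g := rfl
    rw [h3]
    simpa [pX] using h2
  have hf' : ∀ z, f' z = pX (⇑u) (z, y) := by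
    intro z
    rw [hf'def, SchwartzMap.derivCLM_apply, (hder z).deriv]
  -- boundedness of f
  obtain ⟨Cf, hCf⟩ : ∃ C, ∀ z, ‖f z‖ ≤ C := by
    refine ⟨‖f.toBoundedContinuousFunction‖, fun z => ?_⟩
    simpa using f.toBoundedContinuousFunction.norm_coe_le_norm z
  -- integrability facts
  have hintf : Integrable (⇑f) volume := f.integrable
  have hintf' : Integrable (⇑f') volume := f'.integrable
  have hmix : Integrable (fun z => f z * f' z) volume :=
    hintf'.bdd_mul f.continuous.aestronglyMeasurable (ae_of_all _ hCf)
  have hsqf : Integrable (fun z => f z ^ 2) volume := by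
    simpa [pow_two] using
      hintf.bdd_mul f.continuous.aestronglyMeasurable (ae_of_all _ hCf)
  have hsqf' : Integrable (fun z => f' z ^ 2) volume := by
    obtain ⟨Cf', hCf'⟩ : ∃ C, ∀ z, ‖f' z‖ ≤ C := by
      refine ⟨‖f'.toBoundedContinuousFunction‖, fun z => ?_⟩
      simpa using f'.toBoundedContinuousFunction.norm_coe_le_norm z
    simpa [pow_two] using
      hintf'.bdd_mul f'.continuous.aestronglyMeasurable (ae_of_all _ hCf')
  -- FTC on (-∞, x]
  have hF : ∀ z : ℝ, HasDerivAt (fun w => f w ^ 2) (2 * f z * f' z) z := by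
    intro z
    have h := (hder z)
    rw [← hf' z] at h
    simpa using h.fun_pow 2
  have htend : Tendsto (fun z => f z ^ 2) atBot (𝓝 0) := by
    have h0 : Tendsto (⇑f) (cocompact ℝ) (𝓝 0) := zero_at_infty f
    have h1 : Tendsto (⇑f) atBot (𝓝 0) := h0.mono_left atBot_le_cocompact
    simpa using h1.pow 2
  have hintD : Integrable (fun z => 2 * f z * f' z) volume := by
    simpa [mul_assoc] using hmix.const_mul 2
  have hFTC : ∫ z in Set.Iic x, 2 * f z * f' z = f x ^ 2 - 0 :=
    integral_Iic_of_hasDerivAt_of_tendsto' (fun z _ => hF z) hintD.integrableOn htend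
  -- f x ^ 2 ≤ 2 * ∫ |f| * |f'|
  set M : ℝ := ∫ z, |f z| * |f' z| with hMdef
  have hM0 : 0 ≤ M := integral_nonneg fun z => mul_nonneg (abs_nonneg _) (abs_nonneg _)
  have habs : Integrable (fun z => |f z| * |f' z|) volume := by
    simpa [abs_mul] using hmix.abs
  have hstep : f x ^ 2 ≤ 2 * M := by
    have h1 : ∫ z in Set.Iic x, 2 * f z * f' z ≤ ∫ z in Set.Iic x, 2 * (|f z| * |f' z|) := by
      refine integral_mono hintD.integrableOn ?_ ?_
      · exact (habs.const_mul 2).integrableOn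
      · intro z
        calc 2 * f z * f' z ≤ |2 * f z * f' z| := le_abs_self _
          _ = 2 * (|f z| * |f' z|) := by rw [abs_mul, abs_mul]; simp [mul_assoc]
    have h2 : ∫ z in Set.Iic x, 2 * (|f z| * |f' z|) ≤ ∫ z, 2 * (|f z| * |f' z|) :=
      setIntegral_le_integral (habs.const_mul 2)
        (ae_of_all _ fun z => by positivity)
    have h3 : ∫ z, 2 * (|f z| * |f' z|) = 2 * M := integral_const_mul 2 _
    have := hFTC
    rw [sub_zero] at this
    linarith [this ▸ h1, h2, h3 ▸ h2]
  -- Cauchy–Schwarz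
  set A : ℝ := ∫ z, f' z ^ 2 with hAdef
  set B : ℝ := ∫ z, f z ^ 2 with hBdef
  have hA0 : 0 ≤ A := integral_nonneg fun z => sq_nonneg _
  have hB0 : 0 ≤ B := integral_nonneg fun z => sq_nonneg _
  have hrpow2 : ∀ a : ℝ, |a| ^ (2 : ℝ) = a ^ 2 := by
    intro a
    rw [show (2 : ℝ) = ((2 : ℕ) : ℝ) by norm_num, Real.rpow_natCast, sq_abs]
  have hCS : M ≤ B ^ (1 / 2 : ℝ) * A ^ (1 / 2 : ℝ) := by
    have hpq : Real.HolderConjugate 2 2 := by constructor <;> norm_num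
    have hmemf : MemLp (fun z => |f z|) (ENNReal.ofReal 2) volume := by
      rw [show ENNReal.ofReal 2 = 2 by norm_num]
      refine (memLp_two_iff_integrable_sq
        f.continuous.abs.aestronglyMeasurable).2 ?_
      simpa [sq_abs] using hsqf
    have hmemf' : MemLp (fun z => |f' z|) (ENNReal.ofReal 2) volume := by
      rw [show ENNReal.ofReal 2 = 2 by norm_num]
      refine (memLp_two_iff_integrable_sq
        f'.continuous.abs.aestronglyMeasurable).2 ?_
      simpa [sq_abs] using hsqf'
    have h := integral_mul_le_Lp_mul_Lq_of_nonneg hpq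
      (ae_of_all _ fun z => abs_nonneg (f z)) (ae_of_all _ fun z => abs_nonneg (f' z))
      hmemf hmemf'
    have hL : ∫ z, |f z| ^ (2 : ℝ) = B := by
      rw [hBdef]; exact integral_congr_ae (ae_of_all _ fun z => hrpow2 (f z))
    have hR : ∫ z, |f' z| ^ (2 : ℝ) = A := by
      rw [hAdef]; exact integral_congr_ae (ae_of_all _ fun z => hrpow2 (f' z))
    rw [hL, hR] at h
    exact h
  -- conclude
  have hsq : M ^ 2 ≤ B * A := by
    have h1 := pow_le_pow_left₀ hM0 hCS 2
    have h2 : (B ^ (1 / 2 : ℝ) * A ^ (1 / 2 : ℝ)) ^ 2 = B * A := by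
      rw [mul_pow]
      rw [show ∀ c : ℝ, 0 ≤ c → (c ^ (1 / 2 : ℝ)) ^ 2 = c from ?_] 
      · rw [show ∀ c : ℝ, 0 ≤ c → (c ^ (1 / 2 : ℝ)) ^ 2 = c from ?_]
        · exact hA0
        · intro c hc
          rw [← Real.rpow_natCast (c ^ (1 / 2 : ℝ)) 2, ← Real.rpow_mul hc]
          norm_num
      · exact hB0
      · intro c hc
        rw [← Real.rpow_natCast (c ^ (1 / 2 : ℝ)) 2, ← Real.rpow_mul hc]
        norm_num
    rw [h2] at h1
    exact h1
  have hgoalA : (∫ z : ℝ, (pX (⇑u) (z, y)) ^ 2) = A := by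
    rw [hAdef]
    exact integral_congr_ae (ae_of_all _ fun z => by show pX (⇑u) (z, y) ^ 2 = f' z ^ 2; rw [hf' z])
  have hgoalB : (∫ z : ℝ, (u (z, y)) ^ 2) = B := by
    rw [hBdef]
    exact integral_congr_ae (ae_of_all _ fun z => by show u (z, y) ^ 2 = f z ^ 2; rw [hfapp z])
  rw [hgoalA, hgoalB]
  have h4 : |u (x, y)| ^ 4 = (f x ^ 2) ^ 2 := by
    rw [← hfapp x, ← abs_pow, abs_of_nonneg (by positivity)]
    ring
  rw [h4]
  calc (f x ^ 2) ^ 2 ≤ (2 * M) ^ 2 := by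
        apply pow_le_pow_left₀ (sq_nonneg _) hstep
    _ = 4 * M ^ 2 := by ring
    _ ≤ 4 * (B * A) := by linarith
    _ = 4 * A * B := by ring
end

section
/- For every Schwartz function u on ℝ² with an x-antiderivative of u_y, one has sup_y (∫ u(z,y)² dz)² ≤ 4 ‖u_x‖_{L²(ℝ²)}² ‖∂_x⁻¹u_y‖_{L²(ℝ²)}². -/
open MeasureTheory

section Aux
open SchwartzMap Filter


lemma schwartz_tg {E F : Type*} [NormedAddCommGroup E] [NormedSpace ℝ E]
    [NormedAddCommGroup F] [NormedSpace ℝ F] (f : SchwartzMap E F) :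
    Function.HasTemperateGrowth ⇑f :=
  ⟨f.smooth', fun n => ⟨0, SchwartzMap.seminorm ℝ 0 n f, fun x => by
    simpa using SchwartzMap.norm_iteratedFDeriv_le_seminorm ℝ f n x⟩⟩

noncomputable def smul2 (f g : SchwartzMap (ℝ × ℝ) ℝ) : SchwartzMap (ℝ × ℝ) ℝ :=
  SchwartzMap.bilinLeftCLM (ContinuousLinearMap.mul ℝ ℝ) (schwartz_tg g) f

lemma smul2_apply (f g : SchwartzMap (ℝ × ℝ) ℝ) (x : ℝ × ℝ) : smul2 f g x = f x * g x := rfl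

lemma tg_col (z : ℝ) : Function.HasTemperateGrowth (fun s : ℝ => ((z, s) : ℝ × ℝ)) := by
  have hfd : (fun s : ℝ => ((z, s) : ℝ × ℝ)) =
      fun s => (ContinuousLinearMap.inr ℝ ℝ ℝ) s + ((z, 0) : ℝ × ℝ) := by
    funext s; simp [Prod.ext_iff]
  rw [hfd]
  apply Function.HasTemperateGrowth.of_fderiv (k := 1) (C := 1 + |z|)
  · have : (fderiv ℝ fun s => (ContinuousLinearMap.inr ℝ ℝ ℝ) s + ((z, 0) : ℝ × ℝ)) =
        fun _ => ContinuousLinearMap.inr ℝ ℝ ℝ := by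
      funext s
      rw [fderiv_add_const]
      exact (ContinuousLinearMap.inr ℝ ℝ ℝ).fderiv
    rw [this]
    exact Function.HasTemperateGrowth.const _
  · exact ((ContinuousLinearMap.inr ℝ ℝ ℝ).differentiable).add_const _
  · intro s
    have : ‖((z, s) : ℝ × ℝ)‖ ≤ |z| + |s| := by
      rw [Prod.norm_def]
      simp [Real.norm_eq_abs]
    simp only [ContinuousLinearMap.inr_apply, zero_add, Prod.mk_add_mk, add_zero]
    calc ‖((z, s) : ℝ × ℝ)‖ ≤ |z| + |s| := this
      _ ≤ (1 + |z|) * (1 + ‖s‖) ^ 1 := by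
          simp [Real.norm_eq_abs]; nlinarith [abs_nonneg z, abs_nonneg s]


lemma tg_row (s : ℝ) : Function.HasTemperateGrowth (fun z : ℝ => ((z, s) : ℝ × ℝ)) := by
  have hfd : (fun z : ℝ => ((z, s) : ℝ × ℝ)) =
      fun z => (ContinuousLinearMap.inl ℝ ℝ ℝ) z + ((0, s) : ℝ × ℝ) := by
    funext z; simp [Prod.ext_iff]
  rw [hfd]
  apply Function.HasTemperateGrowth.of_fderiv (k := 1) (C := 1 + |s|)
  · have : (fderiv ℝ fun z => (ContinuousLinearMap.inl ℝ ℝ ℝ) z + ((0, s) : ℝ × ℝ)) =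
        fun _ => ContinuousLinearMap.inl ℝ ℝ ℝ := by
      funext z
      rw [fderiv_add_const]
      exact (ContinuousLinearMap.inl ℝ ℝ ℝ).fderiv
    rw [this]
    exact Function.HasTemperateGrowth.const _
  · exact ((ContinuousLinearMap.inl ℝ ℝ ℝ).differentiable).add_const _
  · intro z
    have : ‖((z, s) : ℝ × ℝ)‖ ≤ |z| + |s| := by
      rw [Prod.norm_def]; simp [Real.norm_eq_abs]
    simp only [ContinuousLinearMap.inl_apply, add_zero, Prod.mk_add_mk, zero_add]
    calc ‖((z, s) : ℝ × ℝ)‖ ≤ |z| + |s| := this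
      _ ≤ (1 + |s|) * (1 + ‖z‖) ^ 1 := by
          simp [Real.norm_eq_abs]; nlinarith [abs_nonneg z, abs_nonneg s]

/-- `z ↦ W (z, s)` as a Schwartz map. -/
noncomputable def rowS (s : ℝ) : SchwartzMap (ℝ × ℝ) ℝ →L[ℝ] SchwartzMap ℝ ℝ :=
  SchwartzMap.compCLM ℝ (tg_row s)
    ⟨1, 1, fun z => by
      simpa using le_trans (norm_fst_le ((z, s) : ℝ × ℝ))
        (by simp [pow_one] : ‖((z, s) : ℝ × ℝ)‖ ≤ 1 * (1 + ‖((z, s) : ℝ × ℝ)‖) ^ 1)⟩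

lemma rowS_apply (s : ℝ) (W : SchwartzMap (ℝ × ℝ) ℝ) (z : ℝ) : rowS s W z = W (z, s) := rfl


noncomputable def colS (z : ℝ) : SchwartzMap (ℝ × ℝ) ℝ →L[ℝ] SchwartzMap ℝ ℝ :=
  SchwartzMap.compCLM ℝ (tg_col z)
    ⟨1, 1, fun s => by
      simpa using le_trans (norm_snd_le ((z, s) : ℝ × ℝ))
        (by simp [pow_one] : ‖((z, s) : ℝ × ℝ)‖ ≤ 1 * (1 + ‖((z, s) : ℝ × ℝ)‖) ^ 1)⟩

lemma colS_apply (z : ℝ) (W : SchwartzMap (ℝ × ℝ) ℝ) (s : ℝ) : colS z W s = W (z, s) := rfl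

lemma hasDerivAt_col (f : SchwartzMap (ℝ × ℝ) ℝ) (z s : ℝ) :
    HasDerivAt (fun t => f (z, t)) (fderiv ℝ f (z, s) (0, 1)) s := by
  have h1 : HasDerivAt (fun t : ℝ => ((z, t) : ℝ × ℝ)) ((0 : ℝ), (1 : ℝ)) s :=
    (hasDerivAt_const s z).prodMk (hasDerivAt_id s)
  exact ((f.differentiableAt).hasFDerivAt).comp_hasDerivAt s h1

lemma hasDerivAt_row (f : SchwartzMap (ℝ × ℝ) ℝ) (z s : ℝ) :
    HasDerivAt (fun x => f (x, s)) (fderiv ℝ f (z, s) (1, 0)) z := by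
  have h1 : HasDerivAt (fun x : ℝ => ((x, s) : ℝ × ℝ)) ((1 : ℝ), (0 : ℝ)) z :=
    (hasDerivAt_id z).prodMk (hasDerivAt_const z s)
  exact ((f.differentiableAt).hasFDerivAt).comp_hasDerivAt z h1

lemma schwartz_tendsto_atBot (g : SchwartzMap ℝ ℝ) : Tendsto g atBot (nhds 0) :=
  (zero_at_infty g).mono_left atBot_le_cocompact

lemma schwartz_tendsto_atTop (g : SchwartzMap ℝ ℝ) : Tendsto g atTop (nhds 0) :=
  (zero_at_infty g).mono_left atTop_le_cocompact

lemma iter_int {f : ℝ × ℝ → ℝ} (hf : Integrable f) :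
    ∫ s : ℝ, ∫ z : ℝ, f (z, s) = ∫ p : ℝ × ℝ, f p := by
  have hf' : Integrable (Function.uncurry fun z s => f (z, s)) (volume.prod volume) := by
    rw [← Measure.volume_eq_prod]
    exact hf
  rw [← integral_integral_swap hf', integral_integral hf', ← Measure.volume_eq_prod]

lemma swap_restrict {f : ℝ × ℝ → ℝ} (hf : Integrable f) (y : ℝ) :
    ∫ z : ℝ, ∫ s in Set.Iic y, f (z, s) = ∫ s in Set.Iic y, ∫ z : ℝ, f (z, s) := by
  have hf' : Integrable (Function.uncurry fun z s => f (z, s))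
      (volume.prod (volume.restrict (Set.Iic y))) := by
    have : volume.prod (volume.restrict (Set.Iic y)) =
        (volume : Measure (ℝ × ℝ)).restrict (Set.univ ×ˢ Set.Iic y) := by
      rw [Measure.volume_eq_prod, ← Measure.prod_restrict, Measure.restrict_univ]
    rw [this]
    exact (by simpa [Function.uncurry] using hf.restrict (s := Set.univ ×ˢ Set.Iic y) :)
  exact integral_integral_swap hf'

end Aux

open SchwartzMap Filter in
/-- `sup_y (∫ u(z,y)² dz)² ≤ 4 ‖u_x‖_{L²(ℝ²)}² ‖∂_x⁻¹u_y‖_{L²(ℝ²)}²` for Schwartz `u`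
with `x`-antiderivative `v` of `u_y`. -/
theorem stmt3 (u v : SchwartzMap (ℝ × ℝ) ℝ)
    (hv : ∀ p, pX (⇑v) p = pY (⇑u) p) (y : ℝ) :
    (∫ z : ℝ, (u (z, y)) ^ 2) ^ 2 ≤
      4 * (∫ p : ℝ × ℝ, (pX (⇑u) p) ^ 2) * ∫ p : ℝ × ℝ, (v p) ^ 2 := by
  set ux : SchwartzMap (ℝ × ℝ) ℝ := LineDeriv.lineDerivOpCLM ℝ (SchwartzMap (ℝ × ℝ) ℝ) ((1 : ℝ), (0 : ℝ)) u with hux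
  set uy : SchwartzMap (ℝ × ℝ) ℝ := LineDeriv.lineDerivOpCLM ℝ (SchwartzMap (ℝ × ℝ) ℝ) ((0 : ℝ), (1 : ℝ)) u with huy
  have hpxu : ∀ p, pX (⇑u) p = ux p := fun p => (lineDerivOp_apply_eq_fderiv _ u p).symm
  have hpyu : ∀ p, pY (⇑u) p = uy p := fun p => (lineDerivOp_apply_eq_fderiv _ u p).symm
  have hfv : ∀ p, fderiv ℝ (⇑v) p (1, 0) = uy p := fun p => (hv p).trans (hpyu p)
  set W1 : SchwartzMap (ℝ × ℝ) ℝ := smul2 u uy with hW1def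
  set W2 : SchwartzMap (ℝ × ℝ) ℝ := smul2 ux v with hW2def
  -- Step A: FTC in the second variable
  have ftc : ∀ z : ℝ, (u (z, y)) ^ 2 = ∫ s in Set.Iic y, 2 * W1 (z, s) := by
    intro z
    have hderiv : ∀ s ∈ Set.Iic y, HasDerivAt (fun t => (u (z, t)) ^ 2) (2 * W1 (z, s)) s := by
      intro s _
      have h := (hasDerivAt_col u z s).pow 2
      have e : 2 * W1 (z, s) = (2 : ℕ) * u (z, s) ^ (2 - 1) * fderiv ℝ (⇑u) (z, s) (0, 1) := by
        simp only [hW1def, smul2_apply, huy, LineDeriv.lineDerivOpCLM_apply, lineDerivOp_apply_eq_fderiv]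
        push_cast
        ring
      rw [e]
      exact h
    have hint : IntegrableOn (fun s => 2 * W1 (z, s)) (Set.Iic y) := by
      have h1 : Integrable (fun s => W1 (z, s)) := by
        have h := (colS z W1).integrable (μ := volume)
        have e : ⇑(colS z W1) = fun s => W1 (z, s) := funext (colS_apply z W1)
        rwa [e] at h
      exact (h1.const_mul 2).integrableOn
    have htend : Tendsto (fun s => (u (z, s)) ^ 2) atBot (nhds 0) := by
      have h0 := schwartz_tendsto_atBot (colS z u)
      have e : ⇑(colS z u) = fun s => u (z, s) := funext (colS_apply z u)
      rw [e] at h0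
      simpa using h0.pow 2
    have h := integral_Iic_of_hasDerivAt_of_tendsto' hderiv hint htend
    rw [h, sub_zero]
  -- Step B: integration by parts in the first variable
  have parts : ∀ s : ℝ, (∫ z : ℝ, W1 (z, s)) = - ∫ z : ℝ, W2 (z, s) := by
    intro s
    have hU : ∀ z : ℝ, HasDerivAt (fun x => u (x, s)) (ux (z, s)) z := fun z => by
      simpa [hux, LineDeriv.lineDerivOpCLM_apply, lineDerivOp_apply_eq_fderiv] using hasDerivAt_row u z s
    have hV : ∀ z : ℝ, HasDerivAt (fun x => v (x, s)) (uy (z, s)) z := fun z => by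
      have h := hasDerivAt_row v z s
      rwa [hfv (z, s)] at h
    have hint : ∀ (W : SchwartzMap (ℝ × ℝ) ℝ), Integrable (fun z => W (z, s)) := fun W => by
      have h := (rowS s W).integrable (μ := volume)
      have e : ⇑(rowS s W) = fun z => W (z, s) := funext (rowS_apply s W)
      rwa [e] at h
    have h1 : Integrable ((fun x => u (x, s)) * fun x => uy (x, s)) := by
      have := hint W1
      exact this
    have h2 : Integrable ((fun x => ux (x, s)) * fun x => v (x, s)) := by
      have := hint W2
      exact this
    have h3 : Integrable ((fun x => u (x, s)) * fun x => v (x, s)) := by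
      have := hint (smul2 u v)
      exact this
    have h := integral_mul_deriv_eq_deriv_mul_of_integrable (fun z _ => hU z) (fun z _ => hV z) h1 h2 h3
    simpa [hW1def, hW2def, smul2_apply] using h
  -- Step C: rewrite the inner integral
  have key : (∫ z : ℝ, (u (z, y)) ^ 2) = ∫ s in Set.Iic y, (-2) * ∫ z : ℝ, W2 (z, s) := by
    have c1 : (∫ z : ℝ, (u (z, y)) ^ 2) = ∫ z : ℝ, ∫ s in Set.Iic y, 2 * W1 (z, s) :=
      integral_congr_ae (Filter.Eventually.of_forall fun z => ftc z)
    have c2 : (∫ z : ℝ, ∫ s in Set.Iic y, 2 * W1 (z, s)) =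
        ∫ s in Set.Iic y, ∫ z : ℝ, 2 * W1 (z, s) :=
      swap_restrict (f := fun p => 2 * W1 p) (W1.integrable.const_mul 2) y
    have c3 : ∀ s : ℝ, (∫ z : ℝ, 2 * W1 (z, s)) = (-2) * ∫ z : ℝ, W2 (z, s) := by
      intro s
      rw [integral_const_mul, parts s]
      ring
    rw [c1, c2]
    exact integral_congr_ae (Filter.Eventually.of_forall fun s => c3 s)
  -- Step D: bound by the double integral of |W2|
  have habs : (∫ z : ℝ, (u (z, y)) ^ 2) ≤ 2 * ∫ p : ℝ × ℝ, |W2 p| := by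
    rw [key]
    have hW2 : Integrable (fun p : ℝ × ℝ => W2 p) := W2.integrable
    have hProd : Integrable (fun q : ℝ × ℝ => W2 (q.2, q.1)) (volume.prod volume) := by
      have h0 : Integrable (fun p : ℝ × ℝ => W2 p) (volume.prod volume) := by
        rw [← Measure.volume_eq_prod]; exact hW2
      have := h0.swap
      exact this
    have hInner : Integrable (fun s : ℝ => ∫ z : ℝ, |W2 (z, s)|) := by
      have := hProd.integral_norm_prod_left
      simpa [Real.norm_eq_abs] using this
    have hIc : Integrable (fun s : ℝ => ∫ z : ℝ, W2 (z, s)) := by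
      have := hProd.integral_prod_left
      simpa using this
    calc ∫ s in Set.Iic y, (-2) * ∫ z : ℝ, W2 (z, s)
        ≤ ∫ s in Set.Iic y, 2 * ∫ z : ℝ, |W2 (z, s)| := by
          refine setIntegral_mono_on ((hIc.const_mul (-2)).integrableOn)
            ((hInner.const_mul 2).integrableOn) measurableSet_Iic ?_
          intro s _
          have h1 : -(∫ z : ℝ, W2 (z, s)) ≤ |∫ z : ℝ, W2 (z, s)| := neg_le_abs _
          have h2 : |∫ z : ℝ, W2 (z, s)| ≤ ∫ z : ℝ, |W2 (z, s)| := by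
            simpa [Real.norm_eq_abs] using norm_integral_le_integral_norm (fun z => W2 (z, s))
          linarith
      _ ≤ ∫ s : ℝ, 2 * ∫ z : ℝ, |W2 (z, s)| := by
          refine setIntegral_le_integral (hInner.const_mul 2) ?_
          exact Filter.Eventually.of_forall fun s =>
            mul_nonneg (by norm_num) (integral_nonneg fun z => abs_nonneg _)
      _ = 2 * ∫ p : ℝ × ℝ, |W2 p| := by
          rw [integral_const_mul, iter_int (f := fun p => |W2 p|) hW2.abs]
  -- Step E: Cauchy–Schwarz
  have hMem : ∀ (W : SchwartzMap (ℝ × ℝ) ℝ), MemLp (⇑W) 2 (volume : Measure (ℝ × ℝ)) := by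
    intro W
    rw [memLp_two_iff_integrable_sq W.continuous.aestronglyMeasurable]
    have h := (smul2 W W).integrable (μ := volume)
    have e : ⇑(smul2 W W) = fun x => W x * W x := funext (smul2_apply W W)
    rw [e] at h
    simpa [pow_two] using h
  have holder : (∫ p : ℝ × ℝ, |W2 p|) ≤
      (∫ p : ℝ × ℝ, (ux p) ^ 2) ^ ((1 : ℝ) / 2) * (∫ p : ℝ × ℝ, (v p) ^ 2) ^ ((1 : ℝ) / 2) := by
    have hpq : Real.HolderConjugate 2 2 := Real.holderConjugate_iff.mpr ⟨one_lt_two, by norm_num⟩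
    have mf : MemLp (fun p : ℝ × ℝ => |ux p|) (ENNReal.ofReal 2) volume := by
      have := (hMem ux).norm
      simpa [Real.norm_eq_abs, ENNReal.ofReal_ofNat] using this
    have mg : MemLp (fun p : ℝ × ℝ => |v p|) (ENNReal.ofReal 2) volume := by
      have := (hMem v).norm
      simpa [Real.norm_eq_abs, ENNReal.ofReal_ofNat] using this
    have h := integral_mul_le_Lp_mul_Lq_of_nonneg hpq
      (Filter.Eventually.of_forall fun p => abs_nonneg (ux p))
      (Filter.Eventually.of_forall fun p => abs_nonneg (v p)) mf mg
    have e1 : ∀ x : ℝ, |x| ^ (2 : ℝ) = x ^ 2 := fun x => by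
      rw [show (2 : ℝ) = ((2 : ℕ) : ℝ) by norm_num, Real.rpow_natCast, sq_abs]
    simp only [e1] at h
    calc (∫ p : ℝ × ℝ, |W2 p|) = ∫ p : ℝ × ℝ, |ux p| * |v p| := by
          refine integral_congr_ae (Filter.Eventually.of_forall fun p => ?_)
          show |W2 p| = |ux p| * |v p|
          rw [hW2def, smul2_apply, abs_mul]
      _ ≤ _ := h
  -- Step F: conclude
  set A := ∫ p : ℝ × ℝ, (ux p) ^ 2 with hA'
  set B := ∫ p : ℝ × ℝ, (v p) ^ 2 with hB'
  have hA : 0 ≤ A := integral_nonneg fun p => sq_nonneg _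
  have hB : 0 ≤ B := integral_nonneg fun p => sq_nonneg _
  have hF : 0 ≤ ∫ z : ℝ, (u (z, y)) ^ 2 := integral_nonneg fun z => sq_nonneg _
  have hle : (∫ z : ℝ, (u (z, y)) ^ 2) ≤ 2 * (A ^ ((1 : ℝ) / 2) * B ^ ((1 : ℝ) / 2)) := by
    refine habs.trans ?_
    have := holder
    linarith
  have hgoal : (∫ p : ℝ × ℝ, (pX (⇑u) p) ^ 2) = A := by
    rw [hA']
    refine integral_congr_ae (Filter.Eventually.of_forall fun p => ?_)
    show pX (⇑u) p ^ 2 = ux p ^ 2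
    rw [hpxu p]
  rw [hgoal]
  have hsq := pow_le_pow_left₀ hF hle 2
  refine hsq.trans (le_of_eq ?_)
  have eA : (A ^ ((1 : ℝ) / 2)) ^ 2 = A := by
    rw [← Real.rpow_natCast (A ^ ((1 : ℝ) / 2)) 2, ← Real.rpow_mul hA]
    norm_num
  have eB : (B ^ ((1 : ℝ) / 2)) ^ 2 = B := by
    rw [← Real.rpow_natCast (B ^ ((1 : ℝ) / 2)) 2, ← Real.rpow_mul hB]
    norm_num
  calc (2 * (A ^ ((1 : ℝ) / 2) * B ^ ((1 : ℝ) / 2))) ^ 2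
      = 4 * ((A ^ ((1 : ℝ) / 2)) ^ 2 * (B ^ ((1 : ℝ) / 2)) ^ 2) := by ring
    _ = 4 * A * B := by rw [eA, eB]; ring
end

section
/- There exists C such that for every t ≠ 0 and every ε with 0 ≤ ε ≤ 1/2, sup_{x∈ℝ} |∫₀^∞ ξ^{1/2−ε} e^{i(tξ³+xξ)} dξ| ≤ C |t|^{−1/2+ε/3}. -/
open MeasureTheory Filter

section Stmt8Aux
namespace Stmt8Aux
open Set intervalIntegral
noncomputable section
variable {σ y : ℝ}

/-- The core oscillatory integrand with normalized cubic phase. -/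
def f (σ y : ℝ) (u : ℝ) : ℂ :=
  ((u ^ σ : ℝ) : ℂ) * Complex.exp (Complex.I * ((u ^ 3 + y * u : ℝ) : ℂ))

def h (σ y u : ℝ) : ℝ := u ^ σ / (3 * u ^ 2 + y)

def H (σ y u : ℝ) : ℝ :=
  (σ * u ^ (σ - 1) * (3 * u ^ 2 + y) - u ^ σ * (6 * u)) / (3 * u ^ 2 + y) ^ 2

lemma norm_exp_I_mul (r : ℝ) : ‖Complex.exp (Complex.I * (r : ℂ))‖ = 1 := by
  rw [Complex.norm_exp]
  simp [Complex.mul_re]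

lemma norm_f (hσ0 : 0 ≤ σ) (u : ℝ) (hu : 0 ≤ u) : ‖f σ y u‖ = u ^ σ := by
  rw [f, norm_mul, norm_exp_I_mul, mul_one, Complex.norm_real, Real.norm_eq_abs,
    abs_of_nonneg (Real.rpow_nonneg hu σ)]

lemma cont_f (hσ0 : 0 ≤ σ) : Continuous (f σ y) := by
  apply Continuous.mul
  · exact Complex.continuous_ofReal.comp (Real.continuous_rpow_const hσ0)
  · exact Complex.continuous_exp.comp
      (continuous_const.mul (Complex.continuous_ofReal.comp (by continuity)))

lemma intble_f (hσ0 : 0 ≤ σ) (a b : ℝ) : IntervalIntegrable (f σ y) volume a b :=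
  (cont_f hσ0).intervalIntegrable a b

/-- trivial bound -/
lemma triv (hσ0 : 0 ≤ σ) {a b B : ℝ} (ha : 0 ≤ a) (hab : a ≤ b)
    (hB : ∀ u, a ≤ u → u ≤ b → u ^ σ ≤ B) :
    ‖∫ u in a..b, f σ y u‖ ≤ B * (b - a) := by
  have := intervalIntegral.norm_integral_le_of_norm_le_const (C := B)
    (f := f σ y) (a := a) (b := b) ?_
  · rwa [abs_of_nonneg (by linarith)] at this
  · intro u hu
    rw [Set.uIoc_of_le hab] at hu
    rw [norm_f hσ0 u (le_trans ha hu.1.le)]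
    exact hB u hu.1.le hu.2

lemma hasDerivAt_D (u : ℝ) : HasDerivAt (fun u : ℝ => 3 * u ^ 2 + y) (6 * u) u := by
  have := ((hasDerivAt_pow 2 u).const_mul (3 : ℝ)).add_const y
  refine this.congr_deriv (Eq.symm ?_)
  push_cast; ring

lemma hasDerivAt_h {u : ℝ} (hu : 0 < u) (hD : 3 * u ^ 2 + y ≠ 0) :
    HasDerivAt (h σ y) (H σ y u) u := by
  have hA : HasDerivAt (fun v : ℝ => v ^ σ) (σ * u ^ (σ - 1)) u :=
    Real.hasDerivAt_rpow_const (Or.inl hu.ne')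
  exact hA.div (hasDerivAt_D u) hD

lemma hasDerivAt_E {u : ℝ} :
    HasDerivAt (fun u : ℝ => Complex.exp (Complex.I * ((u ^ 3 + y * u : ℝ) : ℂ)))
      (Complex.I * ((3 * u ^ 2 + y : ℝ) : ℂ) *
        Complex.exp (Complex.I * ((u ^ 3 + y * u : ℝ) : ℂ))) u := by
  have hp : HasDerivAt (fun u : ℝ => u ^ 3 + y * u) (3 * u ^ 2 + y) u := by
    have := (hasDerivAt_pow 3 u).add ((hasDerivAt_id u).const_mul y)
    refine this.congr_deriv (Eq.symm ?_)
    push_cast; ring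
  have := (hp.ofReal_comp.const_mul Complex.I).cexp
  convert this using 1
  ring

lemma contOn_H (hσ0 : 0 ≤ σ) {a b : ℝ} (ha : 0 < a)
    (hD : ∀ u ∈ Set.Icc a b, 3 * u ^ 2 + y ≠ 0) :
    ContinuousOn (H σ y) (Set.Icc a b) := by
  have cD : Continuous (fun u : ℝ => 3 * u ^ 2 + y) := by continuity
  apply ContinuousOn.div
  · apply ContinuousOn.sub
    · apply ContinuousOn.mul ?_ cD.continuousOn
      apply ContinuousOn.mul continuousOn_const
      intro u hu
      exact (Real.continuousAt_rpow_const u (σ - 1)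
        (Or.inl (ne_of_gt (lt_of_lt_of_le ha hu.1)))).continuousWithinAt
    · exact ((Real.continuous_rpow_const hσ0).continuousOn).mul ((continuous_const.mul continuous_id).continuousOn)
  · exact (cD.pow 2).continuousOn
  · intro u hu; exact pow_ne_zero 2 (hD u hu)

/-- Integration by parts bound. -/
lemma ibp (hσ0 : 0 ≤ σ) {a b : ℝ} (ha : 0 < a) (hab : a ≤ b)
    (hD : ∀ u ∈ Set.Icc a b, 3 * u ^ 2 + y ≠ 0) :
    ‖∫ u in a..b, f σ y u‖ ≤ |h σ y a| + |h σ y b| + ∫ u in a..b, |H σ y u| := by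
  set E : ℝ → ℂ := fun u => Complex.exp (Complex.I * ((u ^ 3 + y * u : ℝ) : ℂ)) with hE
  set g : ℝ → ℂ := fun u => -Complex.I * ((h σ y u : ℝ) : ℂ) * E u with hg
  have key : ∀ u ∈ Set.uIcc a b,
      HasDerivAt g (-Complex.I * ((H σ y u : ℝ) : ℂ) * E u + f σ y u) u := by
    intro u hu
    rw [Set.uIcc_of_le hab] at hu
    have hu0 : 0 < u := lt_of_lt_of_le ha hu.1
    have hDu := hD u hu
    have d1 := ((hasDerivAt_h (σ := σ) hu0 hDu).ofReal_comp.const_mul (-Complex.I)).mul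
      (hasDerivAt_E (y := y) (u := u))
    refine d1.congr_deriv (Eq.symm ?_)
    simp only [hE]
    have key2 : -Complex.I * ((h σ y u : ℝ) : ℂ) *
        (Complex.I * ((3 * u ^ 2 + y : ℝ) : ℂ) * Complex.exp (Complex.I * ((u ^ 3 + y * u : ℝ) : ℂ)))
        = ((h σ y u : ℝ) : ℂ) * ((3 * u ^ 2 + y : ℝ) : ℂ) *
          Complex.exp (Complex.I * ((u ^ 3 + y * u : ℝ) : ℂ)) := by
      have hI2 : Complex.I * Complex.I = -1 := Complex.I_mul_I
      calc -Complex.I * ((h σ y u : ℝ) : ℂ) *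
          (Complex.I * ((3 * u ^ 2 + y : ℝ) : ℂ) * Complex.exp (Complex.I * ((u ^ 3 + y * u : ℝ) : ℂ)))
          = -(Complex.I * Complex.I) * (((h σ y u : ℝ) : ℂ) * ((3 * u ^ 2 + y : ℝ) : ℂ) *
            Complex.exp (Complex.I * ((u ^ 3 + y * u : ℝ) : ℂ))) := by ring
        _ = _ := by rw [hI2]; ring
    rw [key2, ← Complex.ofReal_mul]
    have h2 : h σ y u * (3 * u ^ 2 + y) = u ^ σ := by
      rw [h, div_mul_cancel₀ _ hDu]
    rw [h2, f]
  have cH : ContinuousOn (H σ y) (Set.Icc a b) := contOn_H hσ0 ha hD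
  have cE : Continuous E := Complex.continuous_exp.comp
      (continuous_const.mul (Complex.continuous_ofReal.comp (by continuity)))
  have cHE : ContinuousOn (fun u => -Complex.I * ((H σ y u : ℝ) : ℂ) * E u) (Set.Icc a b) := by
    exact (continuousOn_const.mul (Complex.continuous_ofReal.comp_continuousOn cH)).mul
      cE.continuousOn
  have hint1 : IntervalIntegrable (fun u => -Complex.I * ((H σ y u : ℝ) : ℂ) * E u)
      volume a b := by
    apply ContinuousOn.intervalIntegrable
    rwa [Set.uIcc_of_le hab]
  have hint2 : IntervalIntegrable (f σ y) volume a b := (cont_f hσ0).intervalIntegrable a b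
  have hFTC := intervalIntegral.integral_eq_sub_of_hasDerivAt key (hint1.add hint2)
  rw [intervalIntegral.integral_add hint1 hint2] at hFTC
  have hfeq : ∫ u in a..b, f σ y u
      = g b - g a - ∫ u in a..b, -Complex.I * ((H σ y u : ℝ) : ℂ) * E u := by
    rw [← hFTC]; ring
  rw [hfeq]
  have hnormg : ∀ u, ‖g u‖ = |h σ y u| := by
    intro u
    rw [hg]
    simp only []
    rw [norm_mul, norm_mul, hE]
    simp only []
    rw [norm_exp_I_mul, norm_neg, Complex.norm_I, one_mul, mul_one, Complex.norm_real,
      Real.norm_eq_abs]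
  have hintnorm : ‖∫ u in a..b, -Complex.I * ((H σ y u : ℝ) : ℂ) * E u‖
      ≤ ∫ u in a..b, |H σ y u| := by
    have := intervalIntegral.norm_integral_le_integral_norm
      (f := fun u => -Complex.I * ((H σ y u : ℝ) : ℂ) * E u) (a := a) (b := b) (μ := volume) hab
    apply le_trans this
    apply le_of_eq
    apply intervalIntegral.integral_congr
    intro u hu
    simp only []
    rw [norm_mul, norm_mul, hE]
    simp only []
    rw [norm_exp_I_mul, norm_neg, Complex.norm_I, one_mul, mul_one, Complex.norm_real,
      Real.norm_eq_abs]
  calc ‖g b - g a - ∫ u in a..b, -Complex.I * ((H σ y u : ℝ) : ℂ) * E u‖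
      ≤ ‖g b - g a‖ + ‖∫ u in a..b, -Complex.I * ((H σ y u : ℝ) : ℂ) * E u‖ :=
        norm_sub_le _ _
    _ ≤ ‖g b‖ + ‖g a‖ + ∫ u in a..b, |H σ y u| := by
        have := norm_sub_le (g b) (g a); linarith
    _ = |h σ y b| + |h σ y a| + ∫ u in a..b, |H σ y u| := by rw [hnormg, hnormg]
    _ = |h σ y a| + |h σ y b| + ∫ u in a..b, |H σ y u| := by ring

lemma rpow_split {u : ℝ} (hu : 0 < u) : u ^ σ = u ^ (σ - 1) * u := by
  nth_rewrite 1 [show σ = (σ - 1) + 1 by ring]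
  rw [Real.rpow_add hu, Real.rpow_one]

lemma Hneg (hσ : σ ≤ 1 / 2) (hy : y ≤ 0) {u : ℝ} (hu : 0 < u) (hσ0 : 0 ≤ σ) :
    H σ y u ≤ 0 := by
  apply div_nonpos_of_nonpos_of_nonneg _ (sq_nonneg _)
  have hA : 0 ≤ u ^ (σ - 1) := Real.rpow_nonneg hu.le _
  have key : σ * u ^ (σ - 1) * (3 * u ^ 2 + y) ≤ u ^ σ * (6 * u) := by
    have hs : u ^ σ = u ^ (σ - 1) * u := rpow_split hu
    rw [hs]
    have h1 : σ * (3 * u ^ 2 + y) ≤ 6 * u ^ 2 := by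
      nlinarith [sq_nonneg u, mul_nonneg hσ0 (neg_nonneg.2 hy)]
    calc σ * u ^ (σ - 1) * (3 * u ^ 2 + y) = u ^ (σ - 1) * (σ * (3 * u ^ 2 + y)) := by ring
      _ ≤ u ^ (σ - 1) * (6 * u ^ 2) := mul_le_mul_of_nonneg_left h1 hA
      _ = u ^ (σ - 1) * u * (6 * u) := by ring
  linarith

lemma ibp_mono (hσ0 : 0 ≤ σ) (hσ : σ ≤ 1 / 2) (hy : y ≤ 0) {a b : ℝ} (ha : 0 < a) (hab : a ≤ b)
    (hD : ∀ u ∈ Set.Icc a b, 3 * u ^ 2 + y ≠ 0) :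
    ‖∫ u in a..b, f σ y u‖ ≤ 2 * (|h σ y a| + |h σ y b|) := by
  have h1 := ibp hσ0 ha hab hD
  have hderiv : ∀ u ∈ Set.uIcc a b, HasDerivAt (h σ y) (H σ y u) u := by
    intro u hu
    rw [Set.uIcc_of_le hab] at hu
    exact hasDerivAt_h (lt_of_lt_of_le ha hu.1) (hD u hu)
  have hintH : IntervalIntegrable (H σ y) volume a b := by
    apply ContinuousOn.intervalIntegrable
    rw [Set.uIcc_of_le hab]
    exact contOn_H hσ0 ha hD
  have hFTC : ∫ u in a..b, H σ y u = h σ y b - h σ y a :=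
    intervalIntegral.integral_eq_sub_of_hasDerivAt hderiv hintH
  have habs : (∫ u in a..b, |H σ y u|) = h σ y a - h σ y b := by
    have : (∫ u in a..b, |H σ y u|) = ∫ u in a..b, -H σ y u := by
      apply intervalIntegral.integral_congr
      intro u hu
      rw [Set.uIcc_of_le hab] at hu
      exact abs_of_nonpos (Hneg hσ hy (lt_of_lt_of_le ha hu.1) hσ0)
    rw [this, intervalIntegral.integral_neg, hFTC]
    ring
  rw [habs] at h1
  have := le_abs_self (h σ y a)
  have := neg_abs_le (h σ y b)
  linarith

lemma rpow_le_self {σ u : ℝ} (hu : 1 ≤ u) (hσ : σ ≤ 1) : u ^ σ ≤ u := by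
  calc u ^ σ ≤ u ^ (1 : ℝ) := Real.rpow_le_rpow_of_exponent_le hu hσ
    _ = u := Real.rpow_one u

lemma rpow_le_sqrt {σ u v : ℝ} (hσ0 : 0 ≤ σ) (hσ : σ ≤ 1 / 2) (hu : 0 ≤ u) (huv : u ≤ v)
    (hv : 1 ≤ v) : u ^ σ ≤ Real.sqrt v := by
  calc u ^ σ ≤ v ^ σ := Real.rpow_le_rpow hu huv hσ0
    _ ≤ v ^ ((1 : ℝ) / 2) := Real.rpow_le_rpow_of_exponent_le hv hσ
    _ = Real.sqrt v := by rw [Real.sqrt_eq_rpow]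

lemma rpow_sub_nat {u : ℝ} (hu : 0 < u) (c : ℝ) (k : ℕ) : u ^ (c + k) = u ^ c * u ^ k := by
  rw [Real.rpow_add hu, Real.rpow_natCast]

/-- tail estimate for `y ≥ 0` on `[1, R]` -/
lemma tail_nonneg (hσ0 : 0 ≤ σ) (hσ : σ ≤ 1 / 2) (hy : 0 ≤ y) {R : ℝ} (hR : 1 ≤ R) :
    ‖∫ u in (1:ℝ)..R, f σ y u‖ ≤ 3 / 2 := by
  have hD : ∀ u ∈ Set.Icc (1:ℝ) R, 3 * u ^ 2 + y ≠ 0 := by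
    intro u hu; nlinarith [hu.1]
  have h1 := ibp hσ0 one_pos hR hD
  -- endpoint bounds
  have hend : ∀ u, 1 ≤ u → |h σ y u| ≤ 1 / 3 := by
    intro u hu
    have hDpos : 0 < 3 * u ^ 2 + y := by nlinarith
    rw [h, abs_of_nonneg (div_nonneg (Real.rpow_nonneg (by linarith) _) hDpos.le)]
    have hnum : u ^ σ ≤ u := rpow_le_self hu (by linarith)
    have : u ^ σ / (3 * u ^ 2 + y) ≤ u / (3 * u ^ 2) := by
      apply div_le_div₀ (by positivity) hnum (by positivity)
      nlinarith
    apply this.trans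
    rw [div_le_iff₀ (by positivity)]
    nlinarith
  -- pointwise bound on |H|
  have hptw : ∀ u ∈ Set.Icc (1:ℝ) R, |H σ y u| ≤ u ^ (σ - 3) := by
    intro u hu
    have hu1 : (1:ℝ) ≤ u := hu.1
    have hu0 : (0:ℝ) < u := by linarith
    have hDpos : 0 < 3 * u ^ 2 + y := by nlinarith
    have hD3 : 3 * u ^ 2 ≤ 3 * u ^ 2 + y := by linarith
    have e1 : u ^ (σ - 1) = u ^ (σ - 3) * u ^ 2 := by
      have := rpow_sub_nat hu0 (σ - 3) 2
      rw [show σ - 3 + (2:ℕ) = σ - 1 by push_cast; ring] at this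
      exact this
    have e2 : u ^ σ = u ^ (σ - 3) * u ^ 3 := by
      have := rpow_sub_nat hu0 (σ - 3) 3
      rw [show σ - 3 + (3:ℕ) = σ by push_cast; ring] at this
      exact this
    have hA : 0 < u ^ (σ - 3) := Real.rpow_pos_of_pos hu0 _
    rw [H, abs_div, abs_of_nonneg (by positivity : (0:ℝ) ≤ (3 * u ^ 2 + y) ^ 2)]
    rw [div_le_iff₀ (by positivity)]
    have hnum : |σ * u ^ (σ - 1) * (3 * u ^ 2 + y) - u ^ σ * (6 * u)|
        ≤ σ * u ^ (σ - 1) * (3 * u ^ 2 + y) + u ^ σ * (6 * u) := by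
      have t1 : 0 ≤ σ * u ^ (σ - 1) * (3 * u ^ 2 + y) := by positivity
      have t2 : 0 ≤ u ^ σ * (6 * u) := by positivity
      rw [abs_le]; constructor <;> nlinarith
    apply hnum.trans
    rw [e1, e2]
    have key : σ * u ^ 2 * (3 * u ^ 2 + y) + u ^ 3 * (6 * u) ≤ (3 * u ^ 2 + y) ^ 2 := by
      nlinarith [sq_nonneg u, sq_nonneg y, mul_nonneg hy (sq_nonneg u),
        mul_nonneg hσ0 (mul_nonneg (sq_nonneg u) hy)]
    calc σ * (u ^ (σ - 3) * u ^ 2) * (3 * u ^ 2 + y) + u ^ (σ - 3) * u ^ 3 * (6 * u)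
        = u ^ (σ - 3) * (σ * u ^ 2 * (3 * u ^ 2 + y) + u ^ 3 * (6 * u)) := by ring
      _ ≤ u ^ (σ - 3) * (3 * u ^ 2 + y) ^ 2 := mul_le_mul_of_nonneg_left key hA.le
  -- integral comparison
  have hintH : IntervalIntegrable (fun u => |H σ y u|) volume (1:ℝ) R := by
    apply ContinuousOn.intervalIntegrable
    rw [Set.uIcc_of_le hR]
    exact (contOn_H hσ0 one_pos hD).abs
  have hintP : IntervalIntegrable (fun u : ℝ => u ^ (σ - 3)) volume (1:ℝ) R := by
    apply ContinuousOn.intervalIntegrable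
    rw [Set.uIcc_of_le hR]
    intro u hu
    exact (Real.continuousAt_rpow_const u _ (Or.inl (by intro hh; rw [hh] at hu; linarith [hu.1]))).continuousWithinAt
  have hcomp : (∫ u in (1:ℝ)..R, |H σ y u|) ≤ ∫ u in (1:ℝ)..R, u ^ (σ - 3) :=
    intervalIntegral.integral_mono_on hR hintH hintP hptw
  have hval : (∫ u in (1:ℝ)..R, u ^ (σ - 3)) ≤ 2 / 3 := by
    rw [integral_rpow (Or.inr ⟨by intro hh; linarith, by
      rw [Set.uIcc_of_le hR]; intro hh; linarith [hh.1]⟩)]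
    rw [Real.one_rpow]
    have hRp : 0 ≤ R ^ (σ - 3 + 1) := Real.rpow_nonneg (by linarith) _
    have hden : σ - 3 + 1 ≤ -(3/2) := by linarith
    rw [div_le_iff_of_neg (by linarith : σ - 3 + 1 < 0)]
    nlinarith
  linarith [hend 1 le_rfl, hend R hR]

lemma split_norm (hσ0 : 0 ≤ σ) (a b c : ℝ) :
    ‖∫ u in a..c, f σ y u‖ ≤ ‖∫ u in a..b, f σ y u‖ + ‖∫ u in b..c, f σ y u‖ := by
  rw [← intervalIntegral.integral_add_adjacent_intervals (intble_f hσ0 a b) (intble_f hσ0 b c)]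
  exact norm_add_le _ _

lemma piece01 (hσ0 : 0 ≤ σ) {r : ℝ} (h0 : 0 ≤ r) (h1 : r ≤ 1) :
    ‖∫ u in (0:ℝ)..r, f σ y u‖ ≤ 1 := by
  have := triv (y := y) hσ0 le_rfl h0 (B := 1)
    (fun u hu0 hu1 => Real.rpow_le_one hu0 (le_trans hu1 h1) hσ0)
  linarith

lemma caseA (hσ0 : 0 ≤ σ) (hσ : σ ≤ 1 / 2) (hy : 0 ≤ y) {R : ℝ} (hR : 0 ≤ R) :
    ‖∫ u in (0:ℝ)..R, f σ y u‖ ≤ 9 := by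
  by_cases h1 : R ≤ 1
  · linarith [piece01 (y := y) hσ0 hR h1]
  · push_neg at h1
    have hsplit := split_norm (y := y) hσ0 0 1 R
    have p1 := piece01 (y := y) hσ0 zero_le_one le_rfl
    have p2 := tail_nonneg hσ0 hσ hy h1.le
    linarith

lemma caseB (hσ0 : 0 ≤ σ) (hσ : σ ≤ 1 / 2) (hyl : -12 ≤ y) (hy : y ≤ 0) {R : ℝ} (hR : 0 ≤ R) :
    ‖∫ u in (0:ℝ)..R, f σ y u‖ ≤ 9 := by
  have hB2 : ∀ u : ℝ, 0 ≤ u → u ≤ 3 → u ^ σ ≤ 2 := by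
    intro u h0 h3
    have := rpow_le_sqrt hσ0 hσ h0 (le_trans h3 (by norm_num : (3:ℝ) ≤ 4)) (by norm_num)
    rwa [show Real.sqrt 4 = 2 by
      rw [show (4:ℝ) = 2 ^ 2 by norm_num, Real.sqrt_sq (by norm_num : (0:ℝ) ≤ 2)]] at this
  by_cases h3 : R ≤ 3
  · have := triv (y := y) hσ0 le_rfl hR (B := 2) (fun u h0 hb => hB2 u h0 (le_trans hb h3))
    linarith
  · push_neg at h3
    have hsplit := split_norm (y := y) hσ0 0 3 R
    have p1 : ‖∫ u in (0:ℝ)..3, f σ y u‖ ≤ 6 := by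
      have := triv (y := y) hσ0 le_rfl (by norm_num : (0:ℝ) ≤ 3) (B := 2)
        (fun u h0 hb => hB2 u h0 hb)
      linarith
    have hD : ∀ u ∈ Set.Icc (3:ℝ) R, 3 * u ^ 2 + y ≠ 0 := by
      intro u hu
      have := hu.1
      nlinarith
    have p2 := ibp_mono hσ0 hσ hy (by norm_num : (0:ℝ) < 3) h3.le hD
    have hh : ∀ u, 3 ≤ u → |h σ y u| ≤ 1 / 5 := by
      intro u hu
      have hu0 : (0:ℝ) < u := by linarith
      have hDpos : (0:ℝ) < 3 * u ^ 2 + y := by nlinarith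
      rw [h, abs_of_nonneg (div_nonneg (Real.rpow_nonneg hu0.le _) hDpos.le)]
      have h5 : (5 / 3) * u ^ 2 ≤ 3 * u ^ 2 + y := by nlinarith
      calc u ^ σ / (3 * u ^ 2 + y) ≤ u / ((5 / 3) * u ^ 2) :=
            div_le_div₀ (by linarith) (rpow_le_self (by linarith) (by linarith)) (by positivity) h5
        _ ≤ 1 / 5 := by
            rw [div_le_div_iff₀ (by positivity) (by norm_num)]
            nlinarith
    have e1 := hh 3 le_rfl
    have e2 := hh R h3.le
    linarith

set_option maxHeartbeats 2000000 in
lemma caseC' (hσ0 : 0 ≤ σ) (hσ : σ ≤ 1 / 2) {s v : ℝ} (hs1 : 1 < s) (hs2' : 2 < s ^ 2)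
    (hv0 : 0 < v) (hsv : s * v = 1) (hy4 : y = -3 * s ^ 4) {R : ℝ} (hR : 0 ≤ R) :
    ‖∫ u in (0:ℝ)..R, f σ y u‖ ≤ 9 := by
  have hs0 : 0 < s := by linarith
  have hv1 : v < 1 := by nlinarith [mul_pos (sub_pos.2 hs1) hv0]
  have hyneg : y ≤ 0 := by rw [hy4]; nlinarith [pow_pos hs0 4]
  obtain ⟨p, hp⟩ : ∃ p : ℝ, p = s ^ 2 - v := ⟨_, rfl⟩
  obtain ⟨q, hq⟩ : ∃ q : ℝ, q = s ^ 2 + v := ⟨_, rfl⟩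
  have hp1 : 1 < p := by rw [hp]; linarith
  have hq0 : (0:ℝ) < q := by rw [hq]; nlinarith
  have hqp : q - p = 2 * v := by rw [hp, hq]; ring
  have hDle : ∀ u, 0 ≤ u → u ≤ p → 3 * u ^ 2 + y ≤ -(3 * s) := by
    intro u h0 hup
    rw [hy4]
    have hu2 : u ^ 2 ≤ p ^ 2 := pow_le_pow_left₀ h0 hup 2
    have hpv : p ^ 2 = s ^ 4 - 2 * s + v ^ 2 := by
      rw [hp]; linear_combination (-2 * s) * hsv
    have hvv : v ^ 2 < 1 := by nlinarith
    linarith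
  have hDge : ∀ u, q ≤ u → 3 * (u * v) ≤ 3 * u ^ 2 + y := by
    intro u hqu
    rw [hy4]
    have h1 : v ≤ u - s ^ 2 := by rw [hq] at hqu; linarith
    have hu0 : 0 < u := lt_of_lt_of_le hq0 hqu
    have hmul : v * u ≤ (u - s ^ 2) * (u + s ^ 2) :=
      mul_le_mul h1 (by nlinarith) hu0.le (by linarith)
    nlinarith
  have hh1 : ∀ u, 1 ≤ u → u ≤ p → |h σ y u| ≤ 1 / 3 := by
    intro u h1u hup
    have hD := hDle u (by linarith) hup
    have hDneg : 3 * u ^ 2 + y < 0 := by nlinarith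
    have hup2 : u ≤ s ^ 2 := by rw [hp] at hup; linarith
    have hnum : u ^ σ ≤ s := by
      have := rpow_le_sqrt hσ0 hσ (by linarith : (0:ℝ) ≤ u) hup2 (by linarith)
      rwa [Real.sqrt_sq hs0.le] at this
    rw [h, abs_div, abs_of_neg hDneg, abs_of_nonneg (Real.rpow_nonneg (by linarith) _)]
    have h3s : 3 * s ≤ -(3 * u ^ 2 + y) := by linarith
    calc u ^ σ / -(3 * u ^ 2 + y) ≤ s / (3 * s) :=
          div_le_div₀ hs0.le hnum (by positivity) h3s
      _ = 1 / 3 := by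
          rw [div_eq_div_iff (by positivity) (by norm_num)]; ring
  have hh2 : ∀ u, q ≤ u → |h σ y u| ≤ 1 / 3 := by
    intro u hqu
    have hqu' : s ^ 2 + v ≤ u := by rw [hq] at hqu; linarith
    have hu1 : 1 ≤ u := by linarith
    have hD := hDge u hqu
    have hu0 : (0:ℝ) < u := by linarith
    have hDpos : 0 < 3 * u ^ 2 + y := by nlinarith [mul_pos hu0 hv0]
    have hnum : u ^ σ ≤ Real.sqrt u := rpow_le_sqrt hσ0 hσ (by linarith) le_rfl hu1
    rw [h, abs_of_nonneg (div_nonneg (Real.rpow_nonneg hu0.le _) hDpos.le)]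
    have hsq : Real.sqrt u ^ 2 = u := Real.sq_sqrt hu0.le
    have hsqs : s ≤ Real.sqrt u := by
      nlinarith [Real.sqrt_nonneg u, sq_nonneg (Real.sqrt u - s), sq_nonneg (Real.sqrt u + s)]
    calc u ^ σ / (3 * u ^ 2 + y) ≤ Real.sqrt u / (3 * (u * v)) :=
          div_le_div₀ (Real.sqrt_nonneg u) hnum (by positivity) hD
      _ ≤ 1 / 3 := by
          rw [div_le_div_iff₀ (by positivity) (by norm_num)]
          nlinarith [mul_le_mul_of_nonneg_right hsqs hv0.le, Real.sqrt_nonneg u]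
  have A1 : ∀ r, 0 ≤ r → r ≤ p → ‖∫ u in (0:ℝ)..r, f σ y u‖ ≤ 7 / 3 := by
    intro r h0 hrp
    by_cases hr1 : r ≤ 1
    · linarith [piece01 (y := y) hσ0 h0 hr1]
    · push_neg at hr1
      have hsplit := split_norm (y := y) hσ0 0 1 r
      have p1 := piece01 (y := y) hσ0 zero_le_one le_rfl
      have hD : ∀ u ∈ Set.Icc (1:ℝ) r, 3 * u ^ 2 + y ≠ 0 := by
        intro u hu
        have := hDle u (by linarith [hu.1]) (le_trans hu.2 hrp)
        exact ne_of_lt (by nlinarith)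
      have p2 := ibp_mono hσ0 hσ hyneg one_pos hr1.le hD
      have e1 := hh1 1 le_rfl (by linarith)
      have e2 := hh1 r hr1.le hrp
      linarith
  have A2 : ∀ r, p ≤ r → r ≤ q → ‖∫ u in (0:ℝ)..r, f σ y u‖ ≤ 7 / 3 + 4 := by
    intro r hpr hrq
    have hsplit := split_norm (y := y) hσ0 0 p r
    have a1 := A1 p (by linarith) le_rfl
    have hB : ∀ u, p ≤ u → u ≤ r → u ^ σ ≤ 2 * s := by
      intro u hu hur
      have hrq' : r ≤ s ^ 2 + v := by rw [hq] at hrq; linarith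
      have h4s : u ≤ 4 * s ^ 2 := by nlinarith
      have := rpow_le_sqrt hσ0 hσ (by nlinarith : (0:ℝ) ≤ u) h4s (by nlinarith)
      rwa [show Real.sqrt (4 * s ^ 2) = 2 * s by
        rw [show 4 * s ^ 2 = (2 * s) ^ 2 by ring, Real.sqrt_sq (by linarith)]] at this
    have p2 := triv (y := y) hσ0 (by linarith : (0:ℝ) ≤ p) hpr hB
    have hlen : 2 * s * (r - p) ≤ 4 := by
      have hd : r - p ≤ 2 * v := by rw [hq] at hrq; rw [hp] at *; linarith
      nlinarith
    linarith
  by_cases hrq : R ≤ q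
  · by_cases hrp : R ≤ p
    · linarith [A1 R hR hrp]
    · push_neg at hrp
      linarith [A2 R hrp.le hrq]
  · push_neg at hrq
    have hsplit := split_norm (y := y) hσ0 0 q R
    have a2 := A2 q (by linarith) le_rfl
    have hD : ∀ u ∈ Set.Icc q R, 3 * u ^ 2 + y ≠ 0 := by
      intro u hu
      have := hDge u hu.1
      have hu0 : 0 < u := lt_of_lt_of_le hq0 hu.1
      exact ne_of_gt (by nlinarith [mul_pos hu0 hv0])
    have p2 := ibp_mono hσ0 hσ hyneg hq0 hrq.le hD
    have e1 := hh2 q le_rfl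
    have e2 := hh2 R hrq.le
    linarith

lemma caseC (hσ0 : 0 ≤ σ) (hσ : σ ≤ 1 / 2) (hy : y < -12) {R : ℝ} (hR : 0 ≤ R) :
    ‖∫ u in (0:ℝ)..R, f σ y u‖ ≤ 9 := by
  have hw0 : (0:ℝ) ≤ -y / 3 := by linarith
  have hw : 2 < Real.sqrt (-y / 3) := by
    nlinarith [Real.sq_sqrt hw0, Real.sqrt_nonneg (-y / 3)]
  obtain ⟨s, hsdef⟩ : ∃ s : ℝ, s = Real.sqrt (Real.sqrt (-y / 3)) := ⟨_, rfl⟩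
  have hs0 : 0 < s := by rw [hsdef]; exact Real.sqrt_pos.2 (by linarith)
  have hs2 : s ^ 2 = Real.sqrt (-y / 3) := by rw [hsdef]; exact Real.sq_sqrt (Real.sqrt_nonneg _)
  have hs2' : 2 < s ^ 2 := by rw [hs2]; exact hw
  have hs1 : 1 < s := by nlinarith
  have hy4 : y = -3 * s ^ 4 := by
    have h44 : (s ^ 2) ^ 2 = -y / 3 := by rw [hs2]; exact Real.sq_sqrt hw0
    linear_combination 3 * h44
  exact caseC' hσ0 hσ hs1 hs2' (inv_pos.2 hs0) (mul_inv_cancel₀ hs0.ne') hy4 hR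

lemma core (hσ0 : 0 ≤ σ) (hσ : σ ≤ 1 / 2) (y R : ℝ) (hR : 0 ≤ R) :
    ‖∫ u in (0:ℝ)..R, f σ y u‖ ≤ 9 := by
  rcases le_or_gt 0 y with hy | hy
  · exact caseA hσ0 hσ hy hR
  · rcases le_or_gt (-12) y with hyl | hyl
    · exact caseB hσ0 hσ hyl hy.le hR
    · exact caseC hσ0 hσ hyl hR

lemma scaled (hσ0 : 0 ≤ σ) (hσ : σ ≤ 1 / 2) {t : ℝ} (ht : 0 < t) (x R : ℝ) (hR : 0 ≤ R) :
    ‖∫ ξ in (0:ℝ)..R, ((ξ ^ σ : ℝ) : ℂ) *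
        Complex.exp (Complex.I * ((t * ξ ^ 3 + x * ξ : ℝ) : ℂ))‖
      ≤ 9 * t ^ (-(1 + σ) / 3) := by
  set c := t ^ ((1:ℝ)/3) with hcdef
  have hc0 : 0 < c := Real.rpow_pos_of_pos ht _
  have hc3 : c ^ (3:ℕ) = t := by
    rw [hcdef, ← Real.rpow_natCast (t ^ ((1:ℝ)/3)) 3, ← Real.rpow_mul ht.le]
    norm_num
  have key : Set.EqOn
      (fun ξ : ℝ => ((ξ ^ σ : ℝ) : ℂ) *
        Complex.exp (Complex.I * ((t * ξ ^ 3 + x * ξ : ℝ) : ℂ)))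
      (fun ξ : ℝ => ((c ^ (-σ) : ℝ) : ℂ) * f σ (x / c) (c * ξ)) (Set.uIcc 0 R) := by
    intro ξ hξ
    rw [Set.uIcc_of_le hR] at hξ
    have hξ0 : 0 ≤ ξ := hξ.1
    simp only [f]
    have hph : (c * ξ) ^ 3 + x / c * (c * ξ) = t * ξ ^ 3 + x * ξ := by
      field_simp
      rw [← hc3]; ring
    rw [hph]
    have hamp : ((c * ξ) ^ σ : ℝ) = c ^ σ * ξ ^ σ := Real.mul_rpow hc0.le hξ0
    rw [hamp]
    have hcc : c ^ (-σ) * (c ^ σ * ξ ^ σ) = ξ ^ σ := by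
      rw [← mul_assoc, ← Real.rpow_add hc0]
      simp
    rw [← mul_assoc, ← Complex.ofReal_mul, hcc]
  rw [intervalIntegral.integral_congr key]
  rw [intervalIntegral.integral_const_mul]
  rw [intervalIntegral.integral_comp_mul_left (f := f σ (x / c)) hc0.ne']
  rw [mul_zero]
  rw [norm_mul, norm_smul]
  have hbound := core hσ0 hσ (x / c) (c * R) (by positivity)
  have hnorms : ‖((c ^ (-σ) : ℝ) : ℂ)‖ = c ^ (-σ) := by
    rw [Complex.norm_real, Real.norm_eq_abs, abs_of_nonneg (Real.rpow_nonneg hc0.le _)]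
  have hninv : ‖c⁻¹‖ = c⁻¹ := by
    rw [Real.norm_eq_abs, abs_of_nonneg (inv_nonneg.2 hc0.le)]
  rw [hnorms, hninv]
  have hfinal : c ^ (-σ) * c⁻¹ = t ^ (-(1 + σ) / 3) := by
    rw [← Real.rpow_neg_one c, ← Real.rpow_add hc0, hcdef, ← Real.rpow_mul ht.le]
    congr 1
    ring
  calc c ^ (-σ) * (c⁻¹ * ‖∫ u in (0:ℝ)..c * R, f σ (x / c) u‖)
      ≤ c ^ (-σ) * (c⁻¹ * 9) := by
        apply mul_le_mul_of_nonneg_left _ (Real.rpow_nonneg hc0.le _)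
        exact mul_le_mul_of_nonneg_left hbound (inv_nonneg.2 hc0.le)
    _ = c ^ (-σ) * c⁻¹ * 9 := by ring
    _ = 9 * t ^ (-(1 + σ) / 3) := by rw [hfinal]; ring

lemma interval_conj {g : ℝ → ℂ} {a b : ℝ} :
    ∫ x in a..b, (starRingEnd ℂ) (g x) = (starRingEnd ℂ) (∫ x in a..b, g x) := by
  rw [intervalIntegral, intervalIntegral, integral_conj, integral_conj, map_sub]

lemma conj_flip (t x R : ℝ) :
    ‖∫ ξ in (0:ℝ)..R, ((ξ ^ σ : ℝ) : ℂ) *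
        Complex.exp (Complex.I * ((t * ξ ^ 3 + x * ξ : ℝ) : ℂ))‖
    = ‖∫ ξ in (0:ℝ)..R, ((ξ ^ σ : ℝ) : ℂ) *
        Complex.exp (Complex.I * ((-t * ξ ^ 3 + -x * ξ : ℝ) : ℂ))‖ := by
  have : (fun ξ : ℝ => ((ξ ^ σ : ℝ) : ℂ) *
      Complex.exp (Complex.I * ((t * ξ ^ 3 + x * ξ : ℝ) : ℂ)))
      = fun ξ : ℝ => (starRingEnd ℂ) (((ξ ^ σ : ℝ) : ℂ) *
        Complex.exp (Complex.I * ((-t * ξ ^ 3 + -x * ξ : ℝ) : ℂ))) := by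
    funext ξ
    rw [map_mul, Complex.conj_ofReal, ← Complex.exp_conj, map_mul, Complex.conj_I,
      Complex.conj_ofReal]
    congr 2
    push_cast
    ring
  rw [this, interval_conj, RCLike.norm_conj]

lemma main_bound (hσ0 : 0 ≤ σ) (hσ : σ ≤ 1 / 2) {t : ℝ} (ht : t ≠ 0) (x R : ℝ) (hR : 0 ≤ R) :
    ‖∫ ξ in (0:ℝ)..R, ((ξ ^ σ : ℝ) : ℂ) *
        Complex.exp (Complex.I * ((t * ξ ^ 3 + x * ξ : ℝ) : ℂ))‖
      ≤ 9 * |t| ^ (-(1 + σ) / 3) := by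
  rcases ht.lt_or_gt with htn | htp
  · rw [conj_flip, abs_of_neg htn]
    exact scaled hσ0 hσ (by linarith : (0:ℝ) < -t) (-x) R hR
  · rw [abs_of_pos htp]
    exact scaled hσ0 hσ htp x R hR


end
end Stmt8Aux
end Stmt8Aux

/-- Oscillatory integral bound (via Van der Corput): for `t ≠ 0`, `0 ≤ ε ≤ 1/2`,
`sup_x |∫₀^∞ ξ^{1/2−ε} e^{i(tξ³+xξ)} dξ| ≲ |t|^{−1/2+ε/3}`, the integral being
interpreted as the limit of integrals over `[0,R]` as `R → ∞`. -/
theorem stmt8 :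
    ∃ C > (0 : ℝ), ∀ t : ℝ, t ≠ 0 → ∀ ε : ℝ, 0 ≤ ε → ε ≤ 1 / 2 →
      ∀ (x : ℝ) (I : ℂ),
      Tendsto (fun R : ℝ =>
          ∫ ξ in (0:ℝ)..R, ((ξ ^ ((1:ℝ)/2 - ε) : ℝ) : ℂ) *
            Complex.exp (Complex.I * ((t * ξ ^ 3 + x * ξ : ℝ) : ℂ)))
        atTop (nhds I) →
      ‖I‖ ≤ C * |t| ^ (-(1:ℝ)/2 + ε / 3) := by
  refine ⟨9, by norm_num, ?_⟩
  intro t ht ε hε0 hε2 x I hI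
  have key : ∀ᶠ R in atTop,
      ‖∫ ξ in (0:ℝ)..R, ((ξ ^ ((1:ℝ)/2 - ε) : ℝ) : ℂ) *
          Complex.exp (Complex.I * ((t * ξ ^ 3 + x * ξ : ℝ) : ℂ))‖
        ≤ 9 * |t| ^ (-(1:ℝ)/2 + ε / 3) := by
  -- eventually bound
    filter_upwards [eventually_ge_atTop (0:ℝ)] with R hR
    have := Stmt8Aux.main_bound (σ := (1:ℝ)/2 - ε) (by linarith) (by linarith) ht x R hR
    rwa [show -(1 + ((1:ℝ)/2 - ε)) / 3 = -(1:ℝ)/2 + ε / 3 by ring] at this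
  exact le_of_tendsto hI.norm key
end

section
/- (Van der Corput) If φ : [a,b] → ℝ is smooth with |φ''(ξ)| ≥ λ > 0 on [a,b] and g is C¹ on [a,b], then |∫_a^b g(ξ) e^{iφ(ξ)} dξ| ≤ C λ^{−1/2} (‖g‖_{L^∞} + ‖g'‖_{L¹}) for a universal constant C. -/
open MeasureTheory Set Complex intervalIntegral Topology Filter


lemma myconj (c d : ℝ) (f : ℝ → ℂ) :
    ∫ t in c..d, (starRingEnd ℂ) (f t) = (starRingEnd ℂ) (∫ t in c..d, f t) := by
  simp [intervalIntegral, integral_conj]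

lemma conj_exp_I_mul (x : ℝ) :
    (starRingEnd ℂ) (Complex.exp (Complex.I * (x:ℂ))) = Complex.exp (Complex.I * ((-x : ℝ):ℂ)) := by
  rw [← Complex.exp_conj]
  simp



lemma norm_exp_I_mul (x : ℝ) : ‖Complex.exp (Complex.I * (x:ℂ))‖ = 1 := by
  rw [Complex.norm_exp]
  simp [Complex.mul_re]

lemma lemma1 (c d μ : ℝ) (hcd : c ≤ d) (hμ : 0 < μ) (φ ψ ψ' : ℝ → ℝ)
    (hφc : ContinuousOn φ (Icc c d)) (hψc : ContinuousOn ψ (Icc c d))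
    (hψ'c : ContinuousOn ψ' (Icc c d))
    (hφ : ∀ t ∈ Ioo c d, HasDerivAt φ (ψ t) t)
    (hψ : ∀ t ∈ Ioo c d, HasDerivAt ψ (ψ' t) t)
    (hlb : ∀ t ∈ Icc c d, μ ≤ ψ t)
    (hsign : (∀ t ∈ Icc c d, 0 ≤ ψ' t) ∨ (∀ t ∈ Icc c d, ψ' t ≤ 0)) :
    ‖∫ t in c..d, Complex.exp (Complex.I * (φ t : ℂ))‖ ≤ 3 / μ := by
  have hne : ∀ t ∈ Icc c d, ψ t ≠ 0 := fun t ht => ne_of_gt (lt_of_lt_of_le hμ (hlb t ht))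
  -- H t = -I * exp(I φ t) * (ψ t)⁻¹
  set H : ℝ → ℂ := fun t => -Complex.I * Complex.exp (Complex.I * (φ t : ℂ)) * ((ψ t)⁻¹ : ℝ) with hH
  have hHcont : ContinuousOn H (Icc c d) := by
    apply ContinuousOn.mul
    · exact (continuousOn_const.mul ((Complex.continuous_exp.comp_continuousOn
        (continuousOn_const.mul (Complex.continuous_ofReal.comp_continuousOn hφc)))))
    · exact Complex.continuous_ofReal.comp_continuousOn (hψc.inv₀ hne)
  have hHderiv : ∀ t ∈ Ioo c d, HasDerivAt H
      (Complex.exp (Complex.I * (φ t : ℂ)) * (1 + Complex.I * (ψ' t / (ψ t)^2 : ℝ))) t := by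
    intro t ht
    have htm : t ∈ Icc c d := Ioo_subset_Icc_self ht
    have h1 : HasDerivAt (fun t => Complex.exp (Complex.I * (φ t : ℂ)))
        (Complex.exp (Complex.I * (φ t : ℂ)) * (Complex.I * (ψ t : ℂ))) t := by
      have := (((hφ t ht).ofReal_comp).const_mul Complex.I).cexp
      simpa [mul_comm] using this
    have h2 : HasDerivAt (fun t => (((ψ t)⁻¹ : ℝ) : ℂ)) ((-(ψ' t) / (ψ t)^2 : ℝ) : ℂ) t := by
      exact (((hψ t ht).inv (hne t htm))).ofReal_comp
    have := ((h1.const_mul (-Complex.I)).mul h2)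
    refine this.congr_deriv ?_
    have hψne : (ψ t : ℂ) ≠ 0 := by exact_mod_cast hne t htm
    push_cast
    field_simp
    ring_nf
    rw [Complex.I_sq]
    ring
  -- continuity facts
  have hEcont : ContinuousOn (fun t => Complex.exp (Complex.I * (φ t : ℂ))) (Icc c d) :=
    Complex.continuous_exp.comp_continuousOn
      (continuousOn_const.mul (Complex.continuous_ofReal.comp_continuousOn hφc))
  have hρcont : ContinuousOn (fun t => (ψ' t / (ψ t)^2 : ℝ)) (Icc c d) :=
    hψ'c.div (hψc.pow 2) (fun t ht => pow_ne_zero 2 (hne t ht))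
  have hIntE : IntervalIntegrable (fun t => Complex.exp (Complex.I * (φ t : ℂ))) volume c d :=
    hEcont.intervalIntegrable_of_Icc hcd
  have hIntρ : IntervalIntegrable
      (fun t => Complex.exp (Complex.I * (φ t : ℂ)) * ((ψ' t / (ψ t)^2 : ℝ) : ℂ)) volume c d :=
    (hEcont.mul (Complex.continuous_ofReal.comp_continuousOn hρcont)).intervalIntegrable_of_Icc hcd
  have hIntH' : IntervalIntegrable
      (fun t => Complex.exp (Complex.I * (φ t : ℂ)) * (1 + Complex.I * ((ψ' t / (ψ t)^2 : ℝ) : ℂ)))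
      volume c d :=
    (hEcont.mul (continuousOn_const.add (continuousOn_const.mul
      (Complex.continuous_ofReal.comp_continuousOn hρcont)))).intervalIntegrable_of_Icc hcd
  have ftc := integral_eq_sub_of_hasDerivAt_of_le hcd hHcont hHderiv hIntH'
  have hsplit : (∫ t in c..d, Complex.exp (Complex.I * (φ t : ℂ))
        * (1 + Complex.I * ((ψ' t / (ψ t)^2 : ℝ) : ℂ)))
      = (∫ t in c..d, Complex.exp (Complex.I * (φ t : ℂ)))
        + Complex.I * ∫ t in c..d, Complex.exp (Complex.I * (φ t : ℂ)) * ((ψ' t / (ψ t)^2 : ℝ) : ℂ) := by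
    rw [← intervalIntegral.integral_const_mul, ← intervalIntegral.integral_add hIntE
      (hIntρ.const_mul Complex.I)]
    congr 1; funext t; ring
  have key : (∫ t in c..d, Complex.exp (Complex.I * (φ t : ℂ)))
      = (H d - H c) - Complex.I * ∫ t in c..d,
          Complex.exp (Complex.I * (φ t : ℂ)) * ((ψ' t / (ψ t)^2 : ℝ) : ℂ) := by
    rw [← ftc, hsplit]; ring
  -- bound on endpoints
  have hHb : ∀ x ∈ Icc c d, ‖H x‖ ≤ 1 / μ := by
    intro x hx
    have hψx : 0 < ψ x := lt_of_lt_of_le hμ (hlb x hx)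
    have h1 : ‖H x‖ = |ψ x|⁻¹ := by
      show ‖-Complex.I * Complex.exp (Complex.I * (φ x : ℂ)) * (((ψ x)⁻¹ : ℝ) : ℂ)‖ = |ψ x|⁻¹
      rw [norm_mul, norm_mul, norm_neg, Complex.norm_I, one_mul, norm_exp_I_mul, one_mul,
        Complex.norm_real, Real.norm_eq_abs, abs_inv]
    rw [h1, _root_.abs_of_nonneg hψx.le, one_div]
    exact inv_anti₀ hμ (hlb x hx)
  -- bound on the integral term
  have habs : (∫ t in c..d, |ψ' t / (ψ t)^2|) ≤ 1 / μ := by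
    have hftc2 : (∫ t in c..d, ψ' t / (ψ t)^2) = (-(ψ d)⁻¹) - (-(ψ c)⁻¹) := by
      apply integral_eq_sub_of_hasDerivAt_of_le hcd
      · exact (hψc.inv₀ hne).neg
      · intro t ht
        have := ((hψ t ht).inv (hne t (Ioo_subset_Icc_self ht))).neg
        refine this.congr_deriv ?_
        ring
      · exact hρcont.intervalIntegrable_of_Icc hcd
    have hinvc : (ψ c)⁻¹ ≤ 1/μ := by
      rw [one_div]
      exact inv_anti₀ hμ (hlb c ⟨le_refl c, hcd⟩)
    have hinvd : (ψ d)⁻¹ ≤ 1/μ := by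
      rw [one_div]
      exact inv_anti₀ hμ (hlb d ⟨hcd, le_refl d⟩)
    have hinvc0 : 0 ≤ (ψ c)⁻¹ := inv_nonneg.mpr (le_of_lt (lt_of_lt_of_le hμ (hlb c ⟨le_refl c, hcd⟩)))
    have hinvd0 : 0 ≤ (ψ d)⁻¹ := inv_nonneg.mpr (le_of_lt (lt_of_lt_of_le hμ (hlb d ⟨hcd, le_refl d⟩)))
    rcases hsign with hs | hs
    · have : (∫ t in c..d, |ψ' t / (ψ t)^2|) = ∫ t in c..d, ψ' t / (ψ t)^2 := by
        apply intervalIntegral.integral_congr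
        intro t ht
        rw [uIcc_of_le hcd] at ht
        exact abs_of_nonneg (div_nonneg (hs t ht) (sq_nonneg _))
      rw [this, hftc2]; linarith
    · have : (∫ t in c..d, |ψ' t / (ψ t)^2|) = ∫ t in c..d, -(ψ' t / (ψ t)^2) := by
        apply intervalIntegral.integral_congr
        intro t ht
        rw [uIcc_of_le hcd] at ht
        exact _root_.abs_of_nonpos (div_nonpos_of_nonpos_of_nonneg (hs t ht) (sq_nonneg _))
      rw [this, intervalIntegral.integral_neg, hftc2]; linarith
  have hnormint : ‖∫ t in c..d, Complex.exp (Complex.I * (φ t : ℂ)) * ((ψ' t / (ψ t)^2 : ℝ) : ℂ)‖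
      ≤ 1 / μ := by
    refine le_trans (intervalIntegral.norm_integral_le_integral_norm hcd) ?_
    refine le_trans (le_of_eq ?_) habs
    apply intervalIntegral.integral_congr
    intro t _
    show ‖Complex.exp (Complex.I * (φ t : ℂ)) * ((ψ' t / (ψ t)^2 : ℝ) : ℂ)‖ = |ψ' t / (ψ t)^2|
    rw [norm_mul, norm_exp_I_mul, one_mul, Complex.norm_real, Real.norm_eq_abs]
  rw [key]
  have := norm_sub_le (H d - H c) (Complex.I * ∫ t in c..d,
    Complex.exp (Complex.I * (φ t : ℂ)) * ((ψ' t / (ψ t)^2 : ℝ) : ℂ))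
  refine le_trans this ?_
  have h1 := norm_sub_le (H d) (H c)
  have h2 : ‖Complex.I * ∫ t in c..d, Complex.exp (Complex.I * (φ t : ℂ))
      * ((ψ' t / (ψ t)^2 : ℝ) : ℂ)‖ ≤ 1/μ := by
    rw [norm_mul, Complex.norm_I, one_mul]; exact hnormint
  have h3 := hHb d ⟨hcd, le_refl d⟩
  have h4 := hHb c ⟨le_refl c, hcd⟩
  have : 3 / μ = 1/μ + 1/μ + 1/μ := by ring
  rw [this]
  linarith

lemma lemma1neg (c d μ : ℝ) (hcd : c ≤ d) (hμ : 0 < μ) (φ ψ ψ' : ℝ → ℝ)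
    (hφc : ContinuousOn φ (Icc c d)) (hψc : ContinuousOn ψ (Icc c d))
    (hψ'c : ContinuousOn ψ' (Icc c d))
    (hφ : ∀ t ∈ Ioo c d, HasDerivAt φ (ψ t) t)
    (hψ : ∀ t ∈ Ioo c d, HasDerivAt ψ (ψ' t) t)
    (hub : ∀ t ∈ Icc c d, ψ t ≤ -μ)
    (hsign : (∀ t ∈ Icc c d, 0 ≤ ψ' t) ∨ (∀ t ∈ Icc c d, ψ' t ≤ 0)) :
    ‖∫ t in c..d, Complex.exp (Complex.I * (φ t : ℂ))‖ ≤ 3 / μ := by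
  have h := lemma1 c d μ hcd hμ (fun t => -(φ t)) (fun t => -(ψ t)) (fun t => -(ψ' t))
    hφc.neg hψc.neg hψ'c.neg
    (fun t ht => (hφ t ht).neg) (fun t ht => (hψ t ht).neg)
    (fun t ht => by simpa using neg_le_neg (hub t ht))
    (by rcases hsign with hs | hs
        · right; intro t ht; simpa using hs t ht
        · left; intro t ht; simpa using hs t ht)
  calc ‖∫ t in c..d, Complex.exp (Complex.I * (φ t : ℂ))‖
      = ‖(starRingEnd ℂ) (∫ t in c..d, Complex.exp (Complex.I * (φ t : ℂ)))‖ :=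
        (RCLike.norm_conj _).symm
    _ = ‖∫ t in c..d, Complex.exp (Complex.I * ((-(φ t) : ℝ) : ℂ))‖ := by
        rw [← myconj]
        congr 1
        apply intervalIntegral.integral_congr
        intro t _
        exact conj_exp_I_mul (φ t)
    _ ≤ 3 / μ := h

lemma piece (a b lam : ℝ) (hab : a ≤ b) (hl : 0 < lam) (φ ψ ψ' : ℝ → ℝ)
    (hφc : ContinuousOn φ (Icc a b)) (hψc : ContinuousOn ψ (Icc a b))
    (hψ'c : ContinuousOn ψ' (Icc a b))
    (hφ : ∀ t ∈ Ioo a b, HasDerivAt φ (ψ t) t)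
    (hψ : ∀ t ∈ Ioo a b, HasDerivAt ψ (ψ' t) t)
    (hlow : ∀ t ∈ Icc a b, lam ≤ ψ' t)
    (c d : ℝ) (hcm : c ∈ Icc a b) (hdm : d ∈ Icc a b) (hcd : c ≤ d)
    (hlen : d - c ≤ 2 / Real.sqrt lam)
    (hside1 : a = c ∨ ∀ t ∈ Icc a c, ψ t ≤ -Real.sqrt lam)
    (hside2 : d = b ∨ ∀ t ∈ Icc d b, Real.sqrt lam ≤ ψ t) :
    ‖∫ t in a..b, Complex.exp (Complex.I * (φ t : ℂ))‖ ≤ 8 / Real.sqrt lam := by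
  set μ := Real.sqrt lam with hμdef
  have hμ : 0 < μ := Real.sqrt_pos.mpr hl
  have hEcont : ContinuousOn (fun t => Complex.exp (Complex.I * (φ t : ℂ))) (Icc a b) :=
    Complex.continuous_exp.comp_continuousOn
      (continuousOn_const.mul (Complex.continuous_ofReal.comp_continuousOn hφc))
  have hIcc1 : Icc a c ⊆ Icc a b := Icc_subset_Icc le_rfl hcm.2
  have hIcc2 : Icc c d ⊆ Icc a b := Icc_subset_Icc hcm.1 hdm.2
  have hIcc3 : Icc d b ⊆ Icc a b := Icc_subset_Icc hdm.1 le_rfl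
  have hIoo1 : Ioo a c ⊆ Ioo a b := Ioo_subset_Ioo le_rfl hcm.2
  have hIoo3 : Ioo d b ⊆ Ioo a b := Ioo_subset_Ioo hdm.1 le_rfl
  have hI1 : IntervalIntegrable (fun t => Complex.exp (Complex.I * (φ t : ℂ))) volume a c :=
    (hEcont.mono hIcc1).intervalIntegrable_of_Icc hcm.1
  have hI2 : IntervalIntegrable (fun t => Complex.exp (Complex.I * (φ t : ℂ))) volume c d :=
    (hEcont.mono hIcc2).intervalIntegrable_of_Icc hcd
  have hI3 : IntervalIntegrable (fun t => Complex.exp (Complex.I * (φ t : ℂ))) volume d b :=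
    (hEcont.mono hIcc3).intervalIntegrable_of_Icc hdm.2
  have hsplit : (∫ t in a..b, Complex.exp (Complex.I * (φ t : ℂ)))
      = (∫ t in a..c, Complex.exp (Complex.I * (φ t : ℂ)))
      + (∫ t in c..d, Complex.exp (Complex.I * (φ t : ℂ)))
      + (∫ t in d..b, Complex.exp (Complex.I * (φ t : ℂ))) := by
    rw [intervalIntegral.integral_add_adjacent_intervals hI1 hI2,
      intervalIntegral.integral_add_adjacent_intervals (hI1.trans hI2) hI3]
  have hb1 : ‖∫ t in a..c, Complex.exp (Complex.I * (φ t : ℂ))‖ ≤ 3 / μ := by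
    rcases hside1 with h | h
    · rw [← h, intervalIntegral.integral_same, norm_zero]
      positivity
    · exact lemma1neg a c μ hcm.1 hμ φ ψ ψ' (hφc.mono hIcc1) (hψc.mono hIcc1) (hψ'c.mono hIcc1)
        (fun t ht => hφ t (hIoo1 ht)) (fun t ht => hψ t (hIoo1 ht)) h
        (Or.inl (fun t ht => le_trans hl.le (hlow t (hIcc1 ht))))
  have hb3 : ‖∫ t in d..b, Complex.exp (Complex.I * (φ t : ℂ))‖ ≤ 3 / μ := by
    rcases hside2 with h | h
    · rw [h, intervalIntegral.integral_same, norm_zero]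
      positivity
    · exact lemma1 d b μ hdm.2 hμ φ ψ ψ' (hφc.mono hIcc3) (hψc.mono hIcc3) (hψ'c.mono hIcc3)
        (fun t ht => hφ t (hIoo3 ht)) (fun t ht => hψ t (hIoo3 ht)) h
        (Or.inl (fun t ht => le_trans hl.le (hlow t (hIcc3 ht))))
  have hb2 : ‖∫ t in c..d, Complex.exp (Complex.I * (φ t : ℂ))‖ ≤ 2 / μ := by
    have := intervalIntegral.norm_integral_le_of_norm_le_const
      (C := 1) (f := fun t => Complex.exp (Complex.I * (φ t : ℂ))) (a := c) (b := d)
      (fun x _ => le_of_eq (norm_exp_I_mul (φ x)))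
    rw [_root_.abs_of_nonneg (show (0:ℝ) ≤ d - c by linarith), one_mul] at this
    calc ‖∫ t in c..d, Complex.exp (Complex.I * (φ t : ℂ))‖ ≤ d - c := this
      _ ≤ 2 / μ := hlen
  rw [hsplit]
  calc ‖_ + _ + _‖ ≤ ‖(∫ t in a..c, Complex.exp (Complex.I * (φ t : ℂ)))
        + (∫ t in c..d, Complex.exp (Complex.I * (φ t : ℂ)))‖
        + ‖∫ t in d..b, Complex.exp (Complex.I * (φ t : ℂ))‖ := norm_add_le _ _
    _ ≤ ‖∫ t in a..c, Complex.exp (Complex.I * (φ t : ℂ))‖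
        + ‖∫ t in c..d, Complex.exp (Complex.I * (φ t : ℂ))‖
        + ‖∫ t in d..b, Complex.exp (Complex.I * (φ t : ℂ))‖ := by
          have := norm_add_le (∫ t in a..c, Complex.exp (Complex.I * (φ t : ℂ)))
            (∫ t in c..d, Complex.exp (Complex.I * (φ t : ℂ)))
          linarith
    _ ≤ 3/μ + 2/μ + 3/μ := by linarith
    _ = 8/μ := by ring

lemma lemma2 (a b lam : ℝ) (hab : a ≤ b) (hl : 0 < lam) (φ ψ ψ' : ℝ → ℝ)
    (hφc : ContinuousOn φ (Icc a b)) (hψc : ContinuousOn ψ (Icc a b))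
    (hψ'c : ContinuousOn ψ' (Icc a b))
    (hφ : ∀ t ∈ Ioo a b, HasDerivAt φ (ψ t) t)
    (hψ : ∀ t ∈ Ioo a b, HasDerivAt ψ (ψ' t) t)
    (hlow : ∀ t ∈ Icc a b, lam ≤ ψ' t) :
    ‖∫ t in a..b, Complex.exp (Complex.I * (φ t : ℂ))‖ ≤ 8 / Real.sqrt lam := by
  set μ := Real.sqrt lam with hμdef
  have hμ : 0 < μ := Real.sqrt_pos.mpr hl
  have hμ2 : μ * μ = lam := Real.mul_self_sqrt hl.le
  -- growth estimate
  have hgrow : ∀ s ∈ Icc a b, ∀ t ∈ Icc a b, s ≤ t → lam * (t - s) ≤ ψ t - ψ s := by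
    have hmono : MonotoneOn (fun t => ψ t - lam * t) (Icc a b) := by
      apply monotoneOn_of_deriv_nonneg (convex_Icc a b)
      · exact (hψc.sub (continuousOn_const.mul continuousOn_id))
      · intro t ht
        rw [interior_Icc] at ht
        have hder : HasDerivAt (fun u => ψ u - lam * u) (ψ' t - lam) t := by
          exact ((hψ t ht).sub ((hasDerivAt_id t).const_mul lam)).congr_deriv (by simp)
        exact hder.differentiableAt.differentiableWithinAt
      · intro t ht
        rw [interior_Icc] at ht
        have hder : HasDerivAt (fun u => ψ u - lam * u) (ψ' t - lam) t := by
          exact ((hψ t ht).sub ((hasDerivAt_id t).const_mul lam)).congr_deriv (by simp)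
        rw [hder.deriv]
        have := hlow t (Ioo_subset_Icc_self ht)
        linarith
    intro s hs t ht hst
    have := hmono hs ht hst
    simp only at this
    nlinarith
  have hmonoψ : MonotoneOn ψ (Icc a b) := by
    intro s hs t ht hst
    have := hgrow s hs t ht hst
    nlinarith [mul_nonneg hl.le (sub_nonneg.mpr hst)]
  by_cases hb1 : ψ b ≤ -μ
  · -- everything below -μ : c = d = b
    apply piece a b lam hab hl φ ψ ψ' hφc hψc hψ'c hφ hψ hlow b b
      (right_mem_Icc.mpr hab) (right_mem_Icc.mpr hab) le_rfl
      (by simp; positivity)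
      (Or.inr (fun t ht => le_trans (hmonoψ ht (right_mem_Icc.mpr hab) ht.2) hb1))
      (Or.inl rfl)
  by_cases ha1 : μ ≤ ψ a
  · apply piece a b lam hab hl φ ψ ψ' hφc hψc hψ'c hφ hψ hlow a a
      (left_mem_Icc.mpr hab) (left_mem_Icc.mpr hab) le_rfl
      (by simp; positivity)
      (Or.inl rfl)
      (Or.inr (fun t ht => le_trans ha1 (hmonoψ (left_mem_Icc.mpr hab) ht ht.1)))
  push_neg at hb1 ha1
  -- choose c
  have hExc : ∃ c ∈ Icc a b, (-μ ≤ ψ c) ∧ (a = c ∨ (ψ c ≤ -μ ∧ ∀ t ∈ Icc a c, ψ t ≤ -μ)) := by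
    by_cases hc : ψ a < -μ
    · obtain ⟨c, hcm, hcval⟩ := intermediate_value_Icc hab hψc ⟨hc.le, hb1.le⟩
      refine ⟨c, hcm, hcval.ge, Or.inr ⟨hcval.le, fun t ht => ?_⟩⟩
      have := hmonoψ (⟨ht.1, le_trans ht.2 hcm.2⟩ : t ∈ Icc a b) hcm ht.2
      linarith [hcval.le]
    · push_neg at hc
      exact ⟨a, left_mem_Icc.mpr hab, hc, Or.inl rfl⟩
  have hExd : ∃ d ∈ Icc a b, (ψ d ≤ μ) ∧ (d = b ∨ (μ ≤ ψ d ∧ ∀ t ∈ Icc d b, μ ≤ ψ t)) := by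
    by_cases hd : μ < ψ b
    · obtain ⟨d, hdm, hdval⟩ := intermediate_value_Icc hab hψc ⟨ha1.le, hd.le⟩
      refine ⟨d, hdm, hdval.le, Or.inr ⟨hdval.ge, fun t ht => ?_⟩⟩
      have := hmonoψ hdm (⟨le_trans hdm.1 ht.1, ht.2⟩ : t ∈ Icc a b) ht.1
      linarith [hdval.ge]
    · push_neg at hd
      exact ⟨b, right_mem_Icc.mpr hab, hd, Or.inl rfl⟩
  obtain ⟨c, hcm, hc1, hc2⟩ := hExc
  obtain ⟨d, hdm, hd1, hd2⟩ := hExd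
  have hcd : c ≤ d := by
    rcases hc2 with h | h
    · rw [← h]; exact hdm.1
    rcases hd2 with h' | h'
    · rw [h']; exact hcm.2
    by_contra hcon
    push_neg at hcon
    have := hmonoψ hdm hcm hcon.le
    have h1 := h.1; have h2 := h'.1
    linarith
  apply piece a b lam hab hl φ ψ ψ' hφc hψc hψ'c hφ hψ hlow c d hcm hdm hcd
  · -- length bound
    have h0 := hgrow c hcm d hdm hcd
    have h2 : d - c ≤ 2 / μ := by
      rw [le_div_iff₀ hμ]
      nlinarith
    exact h2
  · rcases hc2 with h | h
    · exact Or.inl h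
    · exact Or.inr h.2
  · rcases hd2 with h | h
    · exact Or.inl h
    · exact Or.inr h.2

lemma lemma3 (a b lam : ℝ) (hab : a ≤ b) (hl : 0 < lam) (φ ψ ψ' : ℝ → ℝ)
    (hφc : ContinuousOn φ (Icc a b)) (hψc : ContinuousOn ψ (Icc a b))
    (hψ'c : ContinuousOn ψ' (Icc a b))
    (hφ : ∀ t ∈ Ioo a b, HasDerivAt φ (ψ t) t)
    (hψ : ∀ t ∈ Ioo a b, HasDerivAt ψ (ψ' t) t)
    (habs : ∀ t ∈ Icc a b, lam ≤ |ψ' t|) :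
    ‖∫ t in a..b, Complex.exp (Complex.I * (φ t : ℂ))‖ ≤ 8 / Real.sqrt lam := by
  have hdich : (∀ t ∈ Icc a b, lam ≤ ψ' t) ∨ (∀ t ∈ Icc a b, ψ' t ≤ -lam) := by
    by_contra hcon
    push_neg at hcon
    obtain ⟨⟨x, hx, hxv⟩, ⟨y, hy, hyv⟩⟩ := hcon
    have hxv' : ψ' x ≤ -lam := by
      rcases abs_cases (ψ' x) with ⟨h, _⟩ | ⟨h, _⟩
      · linarith [habs x hx]
      · linarith [habs x hx]
    have hyv' : lam ≤ ψ' y := by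
      rcases abs_cases (ψ' y) with ⟨h, _⟩ | ⟨h, _⟩
      · linarith [habs y hy]
      · linarith [habs y hy]
    have hsub : uIcc x y ⊆ Icc a b := uIcc_subset_Icc hx hy
    have h0 : (0:ℝ) ∈ uIcc (ψ' x) (ψ' y) := by
      rw [Set.mem_uIcc]
      left; constructor <;> linarith
    obtain ⟨z, hz, hzv⟩ := intermediate_value_uIcc (hψ'c.mono hsub) h0
    have := habs z (hsub hz)
    rw [hzv] at this
    simp at this
    linarith
  rcases hdich with h | h
  · exact lemma2 a b lam hab hl φ ψ ψ' hφc hψc hψ'c hφ hψ h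
  · have hres := lemma2 a b lam hab hl (fun t => -(φ t)) (fun t => -(ψ t)) (fun t => -(ψ' t))
      hφc.neg hψc.neg hψ'c.neg
      (fun t ht => (hφ t ht).neg) (fun t ht => (hψ t ht).neg)
      (fun t ht => by simpa using neg_le_neg (h t ht))
    calc ‖∫ t in a..b, Complex.exp (Complex.I * (φ t : ℂ))‖
        = ‖(starRingEnd ℂ) (∫ t in a..b, Complex.exp (Complex.I * (φ t : ℂ)))‖ :=
          (RCLike.norm_conj _).symm
      _ = ‖∫ t in a..b, Complex.exp (Complex.I * ((-(φ t) : ℝ) : ℂ))‖ := by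
          rw [← myconj]
          congr 1
          apply intervalIntegral.integral_congr
          intro t _
          exact conj_exp_I_mul (φ t)
      _ ≤ 8 / Real.sqrt lam := hres

/-- Van der Corput lemma: if `|φ''| ≥ λ > 0` on `[a,b]` and `g` is `C¹`, then
`|∫_a^b g(ξ)e^{iφ(ξ)} dξ| ≤ C λ^{−1/2}(‖g‖_{L^∞} + ‖g'‖_{L¹})` with `C` universal. -/
theorem stmt9 :
    ∃ C > (0 : ℝ), ∀ a b : ℝ, a < b → ∀ (φ : ℝ → ℝ) (g : ℝ → ℂ) (lam : ℝ),
      0 < lam →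
      ContDiffOn ℝ 2 φ (Icc a b) →
      (∀ ξ ∈ Icc a b, lam ≤ |deriv (deriv φ) ξ|) →
      ContDiffOn ℝ 1 g (Icc a b) →
      ‖∫ ξ in a..b, g ξ * Complex.exp (Complex.I * ((φ ξ : ℝ) : ℂ))‖ ≤
        C * lam ^ (-(1:ℝ)/2) *
          ((⨆ ξ : Icc a b, ‖g ξ‖) + ∫ ξ in a..b, ‖deriv g ξ‖) := by
  refine ⟨8, by norm_num, ?_⟩
  intro a b hab φ g lam hlam hφ2 hφ'' hg1
  have hUD : UniqueDiffOn ℝ (Icc a b) := uniqueDiffOn_Icc hab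
  set ψ : ℝ → ℝ := derivWithin φ (Icc a b) with hψdef
  set ψ' : ℝ → ℝ := derivWithin ψ (Icc a b) with hψ'def
  have hψCD : ContDiffOn ℝ 1 ψ (Icc a b) := hφ2.derivWithin hUD (by norm_num)
  have hψc : ContinuousOn ψ (Icc a b) := hψCD.continuousOn
  have hψ'c : ContinuousOn ψ' (Icc a b) := hψCD.continuousOn_derivWithin hUD le_rfl
  have hφc : ContinuousOn φ (Icc a b) := hφ2.continuousOn
  have hmemIcc : ∀ t ∈ Ioo a b, Icc a b ∈ 𝓝 t := fun t ht => Icc_mem_nhds ht.1 ht.2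
  have hφd : ∀ t ∈ Ioo a b, HasDerivAt φ (ψ t) t := fun t ht =>
    ((hφ2.differentiableOn (by norm_num) t (Ioo_subset_Icc_self ht)).hasDerivWithinAt).hasDerivAt
      (hmemIcc t ht)
  have hψd : ∀ t ∈ Ioo a b, HasDerivAt ψ (ψ' t) t := fun t ht =>
    ((hψCD.differentiableOn (by norm_num) t (Ioo_subset_Icc_self ht)).hasDerivWithinAt).hasDerivAt
      (hmemIcc t ht)
  -- transfer the second-derivative bound
  have habs : ∀ t ∈ Icc a b, lam ≤ |ψ' t| := by
    have hIoo : ∀ t ∈ Ioo a b, lam ≤ |ψ' t| := by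
      intro t ht
      have h1 : deriv φ =ᶠ[nhds t] ψ := by
        filter_upwards [Ioo_mem_nhds ht.1 ht.2] with u hu
        exact (hφd u hu).deriv
      have h2 : deriv (deriv φ) t = deriv ψ t := h1.deriv_eq
      rw [(hψd t ht).deriv] at h2
      rw [← h2]
      exact hφ'' t (Ioo_subset_Icc_self ht)
    intro t ht
    have hcl : t ∈ closure (Ioo a b) := by
      rw [closure_Ioo (ne_of_lt hab)]; exact ht
    haveI hne : (nhdsWithin t (Ioo a b)).NeBot := mem_closure_iff_nhdsWithin_neBot.mp hcl
    have hcw : ContinuousWithinAt ψ' (Ioo a b) t := (hψ'c t ht).mono Ioo_subset_Icc_self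
    have htend : Filter.Tendsto (fun u => |ψ' u|) (nhdsWithin t (Ioo a b)) (nhds |ψ' t|) :=
      (_root_.continuous_abs.continuousAt.tendsto).comp hcw
    exact ge_of_tendsto htend (eventually_mem_nhdsWithin.mono (fun u hu => hIoo u hu))
  -- amplitude-free bound
  set E : ℝ → ℂ := fun t => Complex.exp (Complex.I * (φ t : ℂ)) with hEdef
  have hEcont : ContinuousOn E (Icc a b) :=
    Complex.continuous_exp.comp_continuousOn
      (continuousOn_const.mul (Complex.continuous_ofReal.comp_continuousOn hφc))
  set M : ℝ := 8 / Real.sqrt lam with hMdef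
  have hMpos : 0 < M := by positivity
  set G : ℝ → ℂ := fun x => ∫ t in a..x, E t with hGdef
  have hGbound : ∀ x ∈ Icc a b, ‖G x‖ ≤ M := by
    intro x hx
    exact lemma3 a x lam hx.1 hlam φ ψ ψ'
      (hφc.mono (Icc_subset_Icc le_rfl hx.2)) (hψc.mono (Icc_subset_Icc le_rfl hx.2))
      (hψ'c.mono (Icc_subset_Icc le_rfl hx.2))
      (fun t ht => hφd t (Ioo_subset_Ioo le_rfl hx.2 ht))
      (fun t ht => hψd t (Ioo_subset_Ioo le_rfl hx.2 ht))
      (fun t ht => habs t (Icc_subset_Icc le_rfl hx.2 ht))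
  have hGcont : ContinuousOn G (Icc a b) := by
    have h1 : IntegrableOn E (uIcc a b) volume := by
      rw [uIcc_of_le hab.le]
      exact hEcont.integrableOn_Icc
    have := intervalIntegral.continuousOn_primitive_interval h1
    rwa [uIcc_of_le hab.le] at this
  have hGderiv : ∀ t ∈ Ioo a b, HasDerivAt G (E t) t := by
    intro t ht
    exact intervalIntegral.integral_hasDerivAt_right
      ((hEcont.mono (Icc_subset_Icc le_rfl ht.2.le)).intervalIntegrable_of_Icc ht.1.le)
      ((hEcont.mono Ioo_subset_Icc_self).stronglyMeasurableAtFilter isOpen_Ioo t ht)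
      ((hEcont t (Ioo_subset_Icc_self ht)).continuousAt (hmemIcc t ht))
  -- g facts
  have hgc : ContinuousOn g (Icc a b) := hg1.continuousOn
  set g' : ℝ → ℂ := derivWithin g (Icc a b) with hg'def
  have hg'c : ContinuousOn g' (Icc a b) := hg1.continuousOn_derivWithin hUD le_rfl
  have hgd : ∀ t ∈ Ioo a b, HasDerivAt g (g' t) t := fun t ht =>
    ((hg1.differentiableOn (by norm_num) t (Ioo_subset_Icc_self ht)).hasDerivWithinAt).hasDerivAt
      (hmemIcc t ht)
  have hgderiv_eq : ∀ t ∈ Ioo a b, deriv g t = g' t := fun t ht => (hgd t ht).deriv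
  -- a.e. facts
  have haeIoo : ∀ᵐ t ∂(volume.restrict (Set.uIoc a b)), t ∈ Ioo a b := by
    rw [Set.uIoc_of_le hab.le]
    have h1 : ∀ᵐ t ∂(volume.restrict (Ioc a b)), t ∈ Ioc a b :=
      ae_restrict_mem measurableSet_Ioc
    have h2 : ∀ᵐ (t : ℝ) ∂volume, t ≠ b := by
      simp [ae_iff, measure_singleton]
    filter_upwards [h1, ae_restrict_of_ae h2] with t h1t h2t
    exact ⟨h1t.1, lt_of_le_of_ne h1t.2 h2t⟩
  have haeg' : (fun t => deriv g t) =ᵐ[volume.restrict (Set.uIoc a b)] g' := by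
    filter_upwards [haeIoo] with t ht
    exact hgderiv_eq t ht
  have hIntg' : IntervalIntegrable (fun t => deriv g t) volume a b := by
    rw [intervalIntegrable_iff]
    exact (intervalIntegrable_iff.mp (hg'c.intervalIntegrable_of_Icc hab.le)).congr haeg'.symm
  have hIntg'G : IntervalIntegrable (fun t => deriv g t * G t) volume a b := by
    rw [intervalIntegrable_iff]
    refine (intervalIntegrable_iff.mp
      ((hg'c.mul hGcont).intervalIntegrable_of_Icc hab.le)).congr ?_
    filter_upwards [haeIoo] with t ht
    rw [hgderiv_eq t ht]; rfl
  have hIntgE : IntervalIntegrable (fun t => g t * E t) volume a b :=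
    (hgc.mul hEcont).intervalIntegrable_of_Icc hab.le
  -- FTC / integration by parts
  have hftc : (∫ t in a..b, (deriv g t * G t + g t * E t))
      = g b * G b - g a * G a := by
    apply intervalIntegral.integral_eq_sub_of_hasDerivAt_of_le hab.le (hgc.mul hGcont)
    · intro t ht
      have := (hgd t ht).mul (hGderiv t ht)
      rw [← hgderiv_eq t ht] at this
      exact this
    · exact hIntg'G.add hIntgE
  have hGa : G a = 0 := intervalIntegral.integral_same
  have hkey : (∫ t in a..b, g t * E t)
      = g b * G b - ∫ t in a..b, deriv g t * G t := by
    rw [intervalIntegral.integral_add hIntg'G hIntgE] at hftc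
    rw [hGa] at hftc
    rw [mul_zero, sub_zero] at hftc
    linear_combination hftc
  -- sup bound
  have hbdd : BddAbove (range fun ξ : Icc a b => ‖g ξ‖) := by
    obtain ⟨M0, hM0⟩ := isCompact_Icc.exists_bound_of_continuousOn hgc
    exact ⟨M0, by rintro y ⟨ξ, rfl⟩; exact hM0 ξ ξ.2⟩
  have hsup : ‖g b‖ ≤ ⨆ ξ : Icc a b, ‖g ξ‖ :=
    le_ciSup hbdd (⟨b, right_mem_Icc.mpr hab.le⟩ : Icc a b)
  have hsupnn : 0 ≤ ⨆ ξ : Icc a b, ‖g ξ‖ := le_trans (norm_nonneg _) hsup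
  -- norm bounds
  have hn1 : ‖g b * G b‖ ≤ (⨆ ξ : Icc a b, ‖g ξ‖) * M := by
    rw [norm_mul]
    exact mul_le_mul hsup (hGbound b (right_mem_Icc.mpr hab.le)) (norm_nonneg _) hsupnn
  have hn2 : ‖∫ t in a..b, deriv g t * G t‖ ≤ (∫ t in a..b, ‖deriv g t‖) * M := by
    refine le_trans (intervalIntegral.norm_integral_le_integral_norm hab.le) ?_
    have hpt : ∀ t ∈ Icc a b, ‖deriv g t * G t‖ ≤ ‖deriv g t‖ * M := by
      intro t ht
      rw [norm_mul]
      exact mul_le_mul_of_nonneg_left (hGbound t ht) (norm_nonneg _)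
    have hmono := intervalIntegral.integral_mono_on hab.le hIntg'G.norm
      (hIntg'.norm.mul_const M) hpt
    rw [intervalIntegral.integral_mul_const] at hmono
    exact hmono
  -- assemble
  have hmain : ‖∫ ξ in a..b, g ξ * E ξ‖
      ≤ M * ((⨆ ξ : Icc a b, ‖g ξ‖) + ∫ t in a..b, ‖deriv g t‖) := by
    rw [hkey]
    refine le_trans (norm_sub_le _ _) ?_
    have h := add_le_add hn1 hn2
    refine le_trans h (le_of_eq ?_)
    ring
  have hMeq : M = 8 * lam ^ (-(1:ℝ)/2) := by
    rw [hMdef, Real.sqrt_eq_rpow, div_eq_mul_inv, ← Real.rpow_neg hlam.le]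
    norm_num
  calc ‖∫ ξ in a..b, g ξ * E ξ‖
      ≤ M * ((⨆ ξ : Icc a b, ‖g ξ‖) + ∫ t in a..b, ‖deriv g t‖) := hmain
    _ = 8 * lam ^ (-(1:ℝ)/2) * ((⨆ ξ : Icc a b, ‖g ξ‖) + ∫ ξ in a..b, ‖deriv g ξ‖) := by
        rw [hMeq]
end

section
/- The cubic term bound: (1/6)∫_{ℝ²}|u|³ ≤ (1/4)‖u_x‖²_{L²} + (1/4)‖∂_x⁻¹u_y‖²_{L²} + C‖u‖⁶_{L²} for all Schwartz u on ℝ² admitting an x-antiderivative of u_y, with C a universal constant. -/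
open MeasureTheory

open Filter Set SchwartzMap

noncomputable section


lemma schwartz_tg_s16 (f : SchwartzMap (ℝ × ℝ) ℝ) : Function.HasTemperateGrowth ⇑f := by
  refine ⟨f.smooth', fun n => ⟨0, SchwartzMap.seminorm ℝ 0 n f, fun x => ?_⟩⟩
  simpa using f.norm_iteratedFDeriv_le_seminorm ℝ n x

def mulS (f g : SchwartzMap (ℝ × ℝ) ℝ) : SchwartzMap (ℝ × ℝ) ℝ :=
  SchwartzMap.bilinLeftCLM (ContinuousLinearMap.mul ℝ ℝ) (schwartz_tg_s16 g) f

@[simp] lemma mulS_apply (f g : SchwartzMap (ℝ × ℝ) ℝ) (p : ℝ × ℝ) :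
    mulS f g p = f p * g p := rfl

lemma tg_lineY (y : ℝ) : Function.HasTemperateGrowth (fun t : ℝ => ((t, y) : ℝ × ℝ)) := by
  refine Function.HasTemperateGrowth.of_fderiv (k := 1) (C := 1 + ‖y‖) ?_ ?_ ?_
  · have : (fderiv ℝ (fun t : ℝ => ((t, y) : ℝ × ℝ))) =
        fun _ => ((ContinuousLinearMap.id ℝ ℝ).prod (0 : ℝ →L[ℝ] ℝ)) := by
      funext t
      exact (((hasFDerivAt_id t).prodMk (hasFDerivAt_const y t))).fderiv
    rw [this]
    exact Function.HasTemperateGrowth.const _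
  · intro t
    exact ((hasFDerivAt_id t).prodMk (hasFDerivAt_const y t)).differentiableAt
  · intro t
    have : ‖((t, y) : ℝ × ℝ)‖ ≤ ‖t‖ + ‖y‖ := by
      rw [Prod.norm_def]
      exact max_le (by simp [le_add_of_nonneg_right]) (by simp [le_add_of_nonneg_left])
    refine this.trans ?_
    have h1 : (0:ℝ) ≤ ‖t‖ := norm_nonneg t
    have h2 : (0:ℝ) ≤ ‖y‖ := norm_nonneg y
    nlinarith

lemma tg_lineX (x : ℝ) : Function.HasTemperateGrowth (fun t : ℝ => ((x, t) : ℝ × ℝ)) := by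
  refine Function.HasTemperateGrowth.of_fderiv (k := 1) (C := 1 + ‖x‖) ?_ ?_ ?_
  · have : (fderiv ℝ (fun t : ℝ => ((x, t) : ℝ × ℝ))) =
        fun _ => ((0 : ℝ →L[ℝ] ℝ).prod (ContinuousLinearMap.id ℝ ℝ)) := by
      funext t
      exact (((hasFDerivAt_const x t).prodMk (hasFDerivAt_id t))).fderiv
    rw [this]
    exact Function.HasTemperateGrowth.const _
  · intro t
    exact ((hasFDerivAt_const x t).prodMk (hasFDerivAt_id t)).differentiableAt
  · intro t
    have : ‖((x, t) : ℝ × ℝ)‖ ≤ ‖x‖ + ‖t‖ := by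
      rw [Prod.norm_def]
      exact max_le (by simp [le_add_of_nonneg_right]) (by simp [le_add_of_nonneg_left])
    refine this.trans ?_
    have h1 : (0:ℝ) ≤ ‖t‖ := norm_nonneg t
    have h2 : (0:ℝ) ≤ ‖x‖ := norm_nonneg x
    nlinarith

def lineY (f : SchwartzMap (ℝ × ℝ) ℝ) (y : ℝ) : SchwartzMap ℝ ℝ :=
  SchwartzMap.compCLM ℝ (tg_lineY y)
    ⟨1, 1, fun t => by
      have : ‖t‖ ≤ ‖((t, y) : ℝ × ℝ)‖ := norm_fst_le (t, y)
      refine this.trans ?_; simp⟩ f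

@[simp] lemma lineY_apply (f : SchwartzMap (ℝ × ℝ) ℝ) (y t : ℝ) : lineY f y t = f (t, y) := rfl

def lineX (f : SchwartzMap (ℝ × ℝ) ℝ) (x : ℝ) : SchwartzMap ℝ ℝ :=
  SchwartzMap.compCLM ℝ (tg_lineX x)
    ⟨1, 1, fun t => by
      have : ‖t‖ ≤ ‖((x, t) : ℝ × ℝ)‖ := norm_snd_le (x, t)
      refine this.trans ?_; simp⟩ f

@[simp] lemma lineX_apply (f : SchwartzMap (ℝ × ℝ) ℝ) (x t : ℝ) : lineX f x t = f (x, t) := rfl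

def dX (f : SchwartzMap (ℝ × ℝ) ℝ) : SchwartzMap (ℝ × ℝ) ℝ :=
  LineDeriv.lineDerivOp (((1:ℝ), (0:ℝ)) : ℝ × ℝ) f

@[simp] lemma dX_apply (f : SchwartzMap (ℝ × ℝ) ℝ) (p : ℝ × ℝ) : dX f p = pX (⇑f) p :=
  SchwartzMap.lineDerivOp_apply_eq_fderiv _ f p

def dY (f : SchwartzMap (ℝ × ℝ) ℝ) : SchwartzMap (ℝ × ℝ) ℝ :=
  LineDeriv.lineDerivOp (((0:ℝ), (1:ℝ)) : ℝ × ℝ) f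

@[simp] lemma dY_apply (f : SchwartzMap (ℝ × ℝ) ℝ) (p : ℝ × ℝ) : dY f p = pY (⇑f) p :=
  SchwartzMap.lineDerivOp_apply_eq_fderiv _ f p

lemma hasDerivAt_fixY (f : SchwartzMap (ℝ × ℝ) ℝ) (y t : ℝ) :
    HasDerivAt (fun s => f (s, y)) (dX f (t, y)) t := by
  have h1 : HasDerivAt (fun s : ℝ => ((s, y) : ℝ × ℝ)) (((1:ℝ), (0:ℝ)) : ℝ × ℝ) t :=
    (hasDerivAt_id t).prodMk (hasDerivAt_const t y)
  have h2 := (f.differentiableAt (x := ((t, y) : ℝ × ℝ))).hasFDerivAt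
  have := h2.comp_hasDerivAt t h1
  simpa [pX, Function.comp_def] using this

lemma hasDerivAt_fixX (f : SchwartzMap (ℝ × ℝ) ℝ) (x t : ℝ) :
    HasDerivAt (fun s => f (x, s)) (dY f (x, t)) t := by
  have h1 : HasDerivAt (fun s : ℝ => ((x, s) : ℝ × ℝ)) (((0:ℝ), (1:ℝ)) : ℝ × ℝ) t :=
    (hasDerivAt_const t x).prodMk (hasDerivAt_id t)
  have h2 := (f.differentiableAt (x := ((x, t) : ℝ × ℝ))).hasFDerivAt
  have := h2.comp_hasDerivAt t h1
  simpa [pY, Function.comp_def] using this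

lemma tendsto_fixY_bot (f : SchwartzMap (ℝ × ℝ) ℝ) (y : ℝ) :
    Tendsto (fun t => f (t, y)) atBot (nhds 0) :=
  (zero_at_infty (lineY f y)).mono_left atBot_le_cocompact

lemma tendsto_fixY_top (f : SchwartzMap (ℝ × ℝ) ℝ) (y : ℝ) :
    Tendsto (fun t => f (t, y)) atTop (nhds 0) :=
  (zero_at_infty (lineY f y)).mono_left atTop_le_cocompact

lemma tendsto_fixX_bot (f : SchwartzMap (ℝ × ℝ) ℝ) (x : ℝ) :
    Tendsto (fun t => f (x, t)) atBot (nhds 0) :=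
  (zero_at_infty (lineX f x)).mono_left atBot_le_cocompact

-- FTC equation in the second variable:
-- u(x,y)^2 = ∫ s in Iic y, 2 * u (x,s) * dY u (x,s)
lemma sq_eq_integral_Iic (f : SchwartzMap (ℝ × ℝ) ℝ) (x y : ℝ) :
    (f (x, y)) ^ 2 = ∫ s in Iic y, 2 * f (x, s) * dY f (x, s) := by
  have hderiv : ∀ s ∈ Iio y, HasDerivAt (fun s => (f (x, s)) ^ 2)
      (2 * f (x, s) * dY f (x, s)) s := by
    intro s _
    exact ((hasDerivAt_fixX f x s).pow 2).congr_deriv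
      (by rw [show (2:ℕ) - 1 = 1 from rfl]; push_cast; ring)
  have hint : IntegrableOn (fun s => 2 * f (x, s) * dY f (x, s)) (Iic y) := by
    have : Integrable (fun s => 2 * (lineX (mulS f (dY f)) x s)) volume :=
      ((lineX (mulS f (dY f)) x).integrable).const_mul 2
    refine (this.congr ?_).integrableOn
    filter_upwards with s
    simp [mul_assoc]
  have htends : Tendsto (fun s => (f (x, s)) ^ 2) atBot (nhds 0) := by
    have := (tendsto_fixX_bot f x).mul (tendsto_fixX_bot f x)
    simpa [pow_two] using this
  have hcont : ContinuousWithinAt (fun s => (f (x, s)) ^ 2) (Iic y) y :=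
    (((hasDerivAt_fixX f x y).mul (hasDerivAt_fixX f x y)).continuousAt.continuousWithinAt).congr
      (fun t _ => by simp [Pi.mul_apply, sq]) (by simp [Pi.mul_apply, sq])
  have := integral_Iic_of_hasDerivAt_of_tendsto hcont hderiv hint htends
  rw [this, sub_zero]

lemma sq_eq_integral_Iic_x (f : SchwartzMap (ℝ × ℝ) ℝ) (x y : ℝ) :
    (f (x, y)) ^ 2 = ∫ t in Iic x, 2 * f (t, y) * dX f (t, y) := by
  have hderiv : ∀ t ∈ Iio x, HasDerivAt (fun t => (f (t, y)) ^ 2)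
      (2 * f (t, y) * dX f (t, y)) t := by
    intro t _
    exact ((hasDerivAt_fixY f y t).pow 2).congr_deriv
      (by rw [show (2:ℕ) - 1 = 1 from rfl]; push_cast; ring)
  have hint : IntegrableOn (fun t => 2 * f (t, y) * dX f (t, y)) (Iic x) := by
    have : Integrable (fun t => 2 * (lineY (mulS f (dX f)) y t)) volume :=
      ((lineY (mulS f (dX f)) y).integrable).const_mul 2
    refine (this.congr ?_).integrableOn
    filter_upwards with t
    simp [mul_assoc]
  have htends : Tendsto (fun t => (f (t, y)) ^ 2) atBot (nhds 0) := by
    have := (tendsto_fixY_bot f y).mul (tendsto_fixY_bot f y)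
    simpa [pow_two] using this
  have hcont : ContinuousWithinAt (fun t => (f (t, y)) ^ 2) (Iic x) x :=
    (((hasDerivAt_fixY f y x).mul (hasDerivAt_fixY f y x)).continuousAt.continuousWithinAt).congr
      (fun t _ => by simp [Pi.mul_apply, sq]) (by simp [Pi.mul_apply, sq])
  have := integral_Iic_of_hasDerivAt_of_tendsto hcont hderiv hint htends
  rw [this, sub_zero]

-- Lemma A : pointwise square bound
lemma sq_le_two_int (f : SchwartzMap (ℝ × ℝ) ℝ) (x y : ℝ) :
    (f (x, y)) ^ 2 ≤ 2 * ∫ t, |f (t, y) * dX f (t, y)| := by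
  have hint : Integrable (fun t => |f (t, y) * dX f (t, y)|) volume := by
    refine (((lineY (mulS f (dX f)) y).integrable).abs).congr ?_
    filter_upwards with t; simp
  rw [sq_eq_integral_Iic_x f x y]
  calc ∫ t in Iic x, 2 * f (t, y) * dX f (t, y)
      ≤ ∫ t in Iic x, 2 * |f (t, y) * dX f (t, y)| := by
        refine setIntegral_mono ?_ ?_ ?_
        · have : Integrable (fun t => 2 * (lineY (mulS f (dX f)) y t)) volume :=
            ((lineY (mulS f (dX f)) y).integrable).const_mul 2
          refine (this.congr ?_).integrableOn
          filter_upwards with t; simp [mul_assoc]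
        · exact (hint.const_mul 2).integrableOn
        · intro t
          simp only [mul_assoc]
          exact mul_le_mul_of_nonneg_left (le_abs_self _) (by norm_num)
    _ ≤ ∫ t, 2 * |f (t, y) * dX f (t, y)| := by
        refine setIntegral_le_integral (hint.const_mul 2) ?_
        filter_upwards with t; positivity
    _ = 2 * ∫ t, |f (t, y) * dX f (t, y)| := MeasureTheory.integral_const_mul 2 _

lemma line_integrable (F : SchwartzMap (ℝ × ℝ) ℝ) (y : ℝ) :
    Integrable (fun x => F (x, y)) volume :=
  ((lineY F y).integrable).congr (by filter_upwards with t; simp)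

lemma parts (f g : SchwartzMap (ℝ × ℝ) ℝ) (y : ℝ) :
    ∫ x, f (x, y) * dX g (x, y) = - ∫ x, dX f (x, y) * g (x, y) := by
  have hderiv : ∀ x : ℝ, HasDerivAt (fun x => f (x, y) * g (x, y))
      (dX f (x, y) * g (x, y) + f (x, y) * dX g (x, y)) x := fun x =>
    (hasDerivAt_fixY f y x).mul (hasDerivAt_fixY g y x)
  have h1 : Integrable (fun x => dX f (x, y) * g (x, y)) volume :=
    (line_integrable (mulS (dX f) g) y).congr (by filter_upwards with t; simp)
  have h2 : Integrable (fun x => f (x, y) * dX g (x, y)) volume :=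
    (line_integrable (mulS f (dX g)) y).congr (by filter_upwards with t; simp)
  have hzero : (∫ x, (dX f (x, y) * g (x, y) + f (x, y) * dX g (x, y))) = 0 := by
    have hbot : Tendsto (fun x => f (x, y) * g (x, y)) atBot (nhds 0) := by
      simpa using (tendsto_fixY_bot f y).mul (tendsto_fixY_bot g y)
    have htop : Tendsto (fun x => f (x, y) * g (x, y)) atTop (nhds 0) := by
      simpa using (tendsto_fixY_top f y).mul (tendsto_fixY_top g y)
    have := integral_of_hasDerivAt_of_tendsto hderiv (h1.add h2) hbot htop
    simpa using this
  rw [integral_add h1 h2] at hzero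
  linarith

lemma integrable_prod (F : SchwartzMap (ℝ × ℝ) ℝ) :
    Integrable (⇑F) ((volume : Measure ℝ).prod (volume : Measure ℝ)) := by
  rw [← Measure.volume_eq_prod]; exact F.integrable

lemma fubini_symm (F : ℝ × ℝ → ℝ) (hF : Integrable F ((volume : Measure ℝ).prod volume)) :
    ∫ p : ℝ × ℝ, F p = ∫ y : ℝ, ∫ x : ℝ, F (x, y) := by
  rw [Measure.volume_eq_prod]; exact integral_prod_symm F hF

-- Lemma D : slice mass bound
lemma slice_bound (u v : SchwartzMap (ℝ × ℝ) ℝ) (hv : ∀ p, dX v p = dY u p) (y : ℝ) :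
    (∫ x, (u (x, y)) ^ 2) ≤ 2 * ∫ p : ℝ × ℝ, |dX u p * v p| := by
  set W : ℝ × ℝ → ℝ := fun p => 2 * u p * dY u p with hWdef
  have hW : Integrable W volume := by
    have := ((mulS u (dY u)).integrable (μ := volume)).const_mul 2
    exact this.congr (by filter_upwards with p; simp [hWdef, mul_assoc])
  have hWprod : Integrable W ((volume : Measure ℝ).prod volume) := by
    rw [← Measure.volume_eq_prod]; exact hW
  have hWres : Integrable W ((volume : Measure ℝ).prod ((volume : Measure ℝ).restrict (Iic y))) := by
    have heq : (volume : Measure ℝ).prod ((volume : Measure ℝ).restrict (Iic y))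
        = ((volume : Measure ℝ).prod (volume : Measure ℝ)).restrict (univ ×ˢ Iic y) := by
      rw [← Measure.prod_restrict, Measure.restrict_univ]
    rw [heq]
    exact hWprod.restrict
  set K : SchwartzMap (ℝ × ℝ) ℝ := mulS (dX u) v with hKdef
  have hKprod : Integrable (⇑K) ((volume : Measure ℝ).prod volume) := integrable_prod K
  have hG : Integrable (fun s => ∫ x, K (x, s)) volume := hKprod.integral_prod_right
  have hGabs : Integrable (fun s => ∫ x, |K (x, s)|) volume := by
    have := hKprod.norm.integral_prod_right
    simpa [Real.norm_eq_abs] using this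
  have step1 : (∫ x, (u (x, y)) ^ 2) = ∫ x, ∫ s in Iic y, W (x, s) := by
    refine integral_congr_ae ?_
    filter_upwards with x
    exact sq_eq_integral_Iic u x y
  have step2 : (∫ x, ∫ s in Iic y, W (x, s)) = ∫ s in Iic y, ∫ x, W (x, s) :=
    integral_integral_swap (f := fun x s => W (x, s)) hWres
  have inner_eq : ∀ s, (∫ x, W (x, s)) = -2 * ∫ x, K (x, s) := by
    intro s
    have h0 : (∫ x, W (x, s)) = 2 * ∫ x, u (x, s) * dX v (x, s) := by
      rw [← MeasureTheory.integral_const_mul]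
      refine integral_congr_ae ?_
      filter_upwards with x
      simp [hWdef, hv (x, s), mul_assoc]
    rw [h0, parts u v s]
    have hKx : (∫ x, K (x, s)) = ∫ x, dX u (x, s) * v (x, s) :=
      integral_congr_ae (by filter_upwards with x; simp [hKdef])
    rw [hKx]; ring
  have step3 : (∫ s in Iic y, ∫ x, W (x, s)) ≤ ∫ s in Iic y, 2 * ∫ x, |K (x, s)| := by
    refine setIntegral_mono ?_ ?_ ?_
    · have : Integrable (fun s => -2 * ∫ x, K (x, s)) volume := hG.const_mul (-2)
      refine (this.congr ?_).integrableOn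
      filter_upwards with s
      exact (inner_eq s).symm
    · exact (hGabs.const_mul 2).integrableOn
    · intro s
      show (∫ x, W (x, s)) ≤ 2 * ∫ x, |K (x, s)|
      rw [inner_eq s]
      have h1 : |∫ x, K (x, s)| ≤ ∫ x, |K (x, s)| := by
        simpa [Real.norm_eq_abs] using
          norm_integral_le_integral_norm (μ := (volume : Measure ℝ)) (fun x => K (x, s))
      have h2 : -(∫ x, K (x, s)) ≤ |∫ x, K (x, s)| := neg_le_abs _
      nlinarith
  have step4 : (∫ s in Iic y, 2 * ∫ x, |K (x, s)|) ≤ ∫ s, 2 * ∫ x, |K (x, s)| := by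
    refine setIntegral_le_integral (hGabs.const_mul 2) ?_
    filter_upwards with s
    simp only [Pi.zero_apply]
    have : (0:ℝ) ≤ ∫ x, |K (x, s)| := integral_nonneg fun x => abs_nonneg _
    linarith
  have step5 : (∫ s, 2 * ∫ x, |K (x, s)|) = 2 * ∫ p : ℝ × ℝ, |dX u p * v p| := by
    rw [MeasureTheory.integral_const_mul]
    congr 1
    have : (∫ p : ℝ × ℝ, |dX u p * v p|) = ∫ p : ℝ × ℝ, |K p| := by
      refine integral_congr_ae ?_; filter_upwards with p; simp [hKdef]
    rw [this, fubini_symm (fun p => |K p|)]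
    · simpa [Real.norm_eq_abs] using hKprod.norm
  rw [step1, step2]
  calc (∫ s in Iic y, ∫ x, W (x, s)) ≤ ∫ s in Iic y, 2 * ∫ x, |K (x, s)| := step3
    _ ≤ ∫ s, 2 * ∫ x, |K (x, s)| := step4
    _ = 2 * ∫ p : ℝ × ℝ, |dX u p * v p| := step5

lemma eps_cs {X F G : ℝ} (hX : 0 ≤ X) (hF : 0 ≤ F) (hG : 0 ≤ G)
    (h : ∀ ε : ℝ, 0 < ε → 2 * ε * X ≤ ε ^ 2 * F + G) : X ^ 2 ≤ F * G := by
  rcases hX.eq_or_lt with hX0 | hXpos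
  · rw [← hX0]; simpa using mul_nonneg hF hG
  rcases hF.eq_or_lt with hF0 | hFpos
  · exfalso
    have := h ((G + 1) / X) (by positivity)
    rw [← hF0] at this
    have hGX : 2 * ((G + 1) / X) * X = 2 * (G + 1) := by field_simp
    rw [hGX] at this
    nlinarith
  · have key := h (X / F) (by positivity)
    have e : (X / F) ^ 2 * F = X ^ 2 / F := by field_simp
    have e2 : 2 * (X / F) * X = 2 * (X ^ 2 / F) := by field_simp
    rw [e, e2] at key
    have h4 : X ^ 2 / F ≤ G := by linarith
    calc X ^ 2 = (X ^ 2 / F) * F := by field_simp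
      _ ≤ G * F := mul_le_mul_of_nonneg_right h4 hFpos.le
      _ = F * G := mul_comm _ _

lemma cs_abs {α : Type*} [MeasurableSpace α] {μ : Measure α} (f g : α → ℝ)
    (hf : Integrable (fun a => f a ^ 2) μ) (hg : Integrable (fun a => g a ^ 2) μ)
    (hfg : Integrable (fun a => |f a * g a|) μ) :
    (∫ a, |f a * g a| ∂μ) ^ 2 ≤ (∫ a, f a ^ 2 ∂μ) * (∫ a, g a ^ 2 ∂μ) := by
  refine eps_cs (integral_nonneg fun a => abs_nonneg _)
    (integral_nonneg fun a => sq_nonneg _) (integral_nonneg fun a => sq_nonneg _) ?_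
  intro ε hε
  have hpt : ∀ a, 2 * ε * |f a * g a| ≤ ε ^ 2 * f a ^ 2 + g a ^ 2 := by
    intro a
    have h1 : |f a * g a| = |f a| * |g a| := abs_mul _ _
    nlinarith [sq_nonneg (ε * |f a| - |g a|), sq_abs (f a), sq_abs (g a), abs_nonneg (f a),
      abs_nonneg (g a)]
  calc 2 * ε * ∫ a, |f a * g a| ∂μ = ∫ a, 2 * ε * |f a * g a| ∂μ :=
        (MeasureTheory.integral_const_mul _ _).symm
    _ ≤ ∫ a, (ε ^ 2 * f a ^ 2 + g a ^ 2) ∂μ := by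
        refine integral_mono (hfg.const_mul _) ((hf.const_mul _).add hg) ?_
        intro a; exact hpt a
    _ = ε ^ 2 * (∫ a, f a ^ 2 ∂μ) + ∫ a, g a ^ 2 ∂μ := by
        rw [integral_add (hf.const_mul _) hg, MeasureTheory.integral_const_mul]

lemma amgm4 {w x y z : ℝ} (hw : 0 ≤ w) (hx : 0 ≤ x) (hy : 0 ≤ y) (hz : 0 ≤ z) :
    256 * (w * x * y * z) ≤ (w + x + y + z) ^ 4 := by
  have h1 : 4 * (w * x) ≤ (w + x) ^ 2 := by nlinarith [sq_nonneg (w - x)]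
  have h2 : 4 * (y * z) ≤ (y + z) ^ 2 := by nlinarith [sq_nonneg (y - z)]
  have h3 : 4 * ((w + x) * (y + z)) ≤ ((w + x) + (y + z)) ^ 2 := by
    nlinarith [sq_nonneg (w + x - y - z)]
  nlinarith [mul_nonneg (mul_nonneg hw hx) (mul_nonneg hy hz),
    mul_nonneg (add_nonneg hw hx) (add_nonneg hy hz),
    mul_le_mul h1 h2 (by positivity) (by positivity),
    sq_nonneg ((w + x) * (y + z))]

lemma final_ineq {I P Q R a b : ℝ} (hI : 0 ≤ I) (hP : 0 ≤ P) (hQ : 0 ≤ Q) (hR : 0 ≤ R)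
    (ha : 0 ≤ a) (hb : 0 ≤ b) (h1 : I ^ 2 ≤ 4 * b * a * P) (h2 : a ^ 2 ≤ P * Q)
    (h3 : b ^ 2 ≤ Q * R) : (1/6) * I ≤ (1/4) * Q + (1/4) * R + 1 * P ^ 3 := by
  have hI4 : I ^ 4 ≤ 16 * (P ^ 3 * Q ^ 2 * R) := by
    have e1 : I ^ 4 = (I ^ 2) ^ 2 := by ring
    have e2 : (I ^ 2) ^ 2 ≤ (4 * b * a * P) ^ 2 := by
      have := sq_nonneg I
      nlinarith [mul_nonneg (mul_nonneg (mul_nonneg (by norm_num : (0:ℝ) ≤ 4) hb) ha) hP]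
    have e3 : (4 * b * a * P) ^ 2 = 16 * (b ^ 2) * (a ^ 2) * P ^ 2 := by ring
    calc I ^ 4 = (I ^ 2) ^ 2 := e1
      _ ≤ 16 * (b ^ 2) * (a ^ 2) * P ^ 2 := by rw [← e3]; exact e2
      _ ≤ 16 * (Q * R) * (P * Q) * P ^ 2 := by
          have hP2 : (0:ℝ) ≤ P ^ 2 := sq_nonneg P
          have hba : b ^ 2 * a ^ 2 ≤ (Q * R) * (P * Q) :=
            mul_le_mul h3 h2 (sq_nonneg a) (mul_nonneg hQ hR)
          nlinarith [mul_le_mul_of_nonneg_right hba hP2]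
      _ = 16 * (P ^ 3 * Q ^ 2 * R) := by ring
  set S : ℝ := (3/2) * Q + (3/2) * R + 6 * P ^ 3 with hS
  have hSnn : 0 ≤ S := by positivity
  have hS4 : I ^ 4 ≤ S ^ 4 := by
    refine hI4.trans ?_
    have := amgm4 (w := 6 * P ^ 3) (x := (3/2) * R) (y := (3/4) * Q) (z := (3/4) * Q)
      (by positivity) (by positivity) (by positivity) (by positivity)
    calc 16 * (P ^ 3 * Q ^ 2 * R) ≤ 256 * ((6 * P ^ 3) * ((3/2) * R) * ((3/4) * Q) * ((3/4) * Q)) := by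
          nlinarith [mul_nonneg (mul_nonneg (pow_nonneg hP 3) (sq_nonneg Q)) hR]
      _ ≤ ((6 * P ^ 3) + ((3/2) * R) + ((3/4) * Q) + ((3/4) * Q)) ^ 4 := this
      _ = S ^ 4 := by rw [hS]; ring_nf
  have hIS : I ≤ S := le_of_pow_le_pow_left₀ (by norm_num) hSnn hS4
  rw [hS] at hIS
  linarith


set_option maxHeartbeats 1000000 in
/-- Cubic term bound:
`(1/6)∫|u|³ ≤ (1/4)‖u_x‖²_{L²} + (1/4)‖∂_x⁻¹u_y‖²_{L²} + C‖u‖⁶_{L²}`. -/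
theorem stmt16 :
    ∃ C > (0 : ℝ), ∀ u v : SchwartzMap (ℝ × ℝ) ℝ,
      (∀ p, pX (⇑v) p = pY (⇑u) p) →
      (1/6) * (∫ p : ℝ × ℝ, |u p| ^ 3) ≤
        (1/4) * (∫ p : ℝ × ℝ, (pX (⇑u) p) ^ 2) + (1/4) * (∫ p : ℝ × ℝ, (v p) ^ 2)
          + C * (∫ p : ℝ × ℝ, (u p) ^ 2) ^ 3 := by
  refine ⟨1, one_pos, ?_⟩
  intro u v hv
  have hv' : ∀ p, dX v p = dY u p := fun p => by
    rw [dX_apply, dY_apply]; exact hv p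
  have hQeq : (∫ p : ℝ × ℝ, (pX (⇑u) p) ^ 2) = ∫ p : ℝ × ℝ, (dX u p) ^ 2 :=
    integral_congr_ae (by filter_upwards with p; rw [dX_apply])
  rw [hQeq]
  set P : ℝ := ∫ p : ℝ × ℝ, (u p) ^ 2 with hPdef
  set Q : ℝ := ∫ p : ℝ × ℝ, (dX u p) ^ 2 with hQdef
  set R : ℝ := ∫ p : ℝ × ℝ, (v p) ^ 2 with hRdef
  set I : ℝ := ∫ p : ℝ × ℝ, |u p| ^ 3 with hIdef
  set a : ℝ := ∫ p : ℝ × ℝ, |u p * dX u p| with hadef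
  set b : ℝ := ∫ p : ℝ × ℝ, |dX u p * v p| with hbdef
  -- basic integrability on the plane
  have hiP : Integrable (fun p : ℝ × ℝ => (u p) ^ 2) volume :=
    ((mulS u u).integrable).congr (by filter_upwards with p; simp [sq])
  have hiQ : Integrable (fun p : ℝ × ℝ => (dX u p) ^ 2) volume :=
    ((mulS (dX u) (dX u)).integrable).congr (by filter_upwards with p; simp [sq])
  have hiR : Integrable (fun p : ℝ × ℝ => (v p) ^ 2) volume :=
    ((mulS v v).integrable).congr (by filter_upwards with p; simp [sq])
  have hia : Integrable (fun p : ℝ × ℝ => |u p * dX u p|) volume :=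
    ((mulS u (dX u)).integrable).abs.congr (by filter_upwards with p; simp)
  have hib : Integrable (fun p : ℝ × ℝ => |dX u p * v p|) volume :=
    ((mulS (dX u) v).integrable).abs.congr (by filter_upwards with p; simp)
  have hicube : Integrable (fun p : ℝ × ℝ => |u p| ^ 3) volume :=
    ((mulS (mulS u u) u).integrable).abs.congr
      (by filter_upwards with p
          show |u p * u p * u p| = |u p| ^ 3
          rw [abs_mul, abs_mul]; ring)
  -- nonnegativity
  have hP0 : 0 ≤ P := integral_nonneg fun p => sq_nonneg _
  have hQ0 : 0 ≤ Q := integral_nonneg fun p => sq_nonneg _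
  have hR0 : 0 ≤ R := integral_nonneg fun p => sq_nonneg _
  have hI0 : 0 ≤ I := integral_nonneg fun p => by positivity
  have ha0 : 0 ≤ a := integral_nonneg fun p => abs_nonneg _
  have hb0 : 0 ≤ b := integral_nonneg fun p => abs_nonneg _
  -- Cauchy-Schwarz on the plane
  have ha2 : a ^ 2 ≤ P * Q := by
    have := cs_abs (μ := (volume : Measure (ℝ × ℝ))) (⇑u) (fun p => dX u p) hiP hiQ hia
    exact this
  have hb2 : b ^ 2 ≤ Q * R := by
    have := cs_abs (μ := (volume : Measure (ℝ × ℝ))) (fun p => dX u p) (⇑v) hiQ hiR hib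
    exact this
  -- slice quantities
  set A : ℝ → ℝ := fun y => ∫ x, |u (x, y) * dX u (x, y)| with hAdef
  set hY : ℝ → ℝ := fun y => ∫ x, (u (x, y)) ^ 2 with hhYdef
  have hA0 : ∀ y, 0 ≤ A y := fun y => integral_nonneg fun x => abs_nonneg _
  have hhY0 : ∀ y, 0 ≤ hY y := fun y => integral_nonneg fun x => sq_nonneg _
  have hAint : Integrable A volume := by
    have := (integrable_prod (mulS u (dX u))).norm.integral_prod_right
    refine this.congr ?_
    filter_upwards with y
    show (∫ x, ‖(mulS u (dX u)) (x, y)‖) = A y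
    simp only [hAdef]
    refine integral_congr_ae ?_
    filter_upwards with x
    simp [Real.norm_eq_abs, abs_mul]
  have hhYint : Integrable hY volume := by
    have h1 : Integrable (fun p : ℝ × ℝ => (u p) ^ 2) ((volume : Measure ℝ).prod volume) := by
      rw [← Measure.volume_eq_prod]; exact hiP
    exact h1.integral_prod_right
  have hAa : (∫ y, A y) = a := by
    rw [hadef, fubini_symm (fun p : ℝ × ℝ => |u p * dX u p|)]
    rw [← Measure.volume_eq_prod]; exact hia
  have hhYP : (∫ y, hY y) = P := by
    rw [hPdef, fubini_symm (fun p : ℝ × ℝ => (u p) ^ 2)]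
    rw [← Measure.volume_eq_prod]; exact hiP
  have hhYb : ∀ y, hY y ≤ 2 * b := fun y => slice_bound u v hv' y
  -- cube slice bound
  have cube_slice : ∀ y, (∫ x, |u (x, y)| ^ 3) ≤ Real.sqrt (2 * A y) * hY y := by
    intro y
    have hub : ∀ x, |u (x, y)| ≤ Real.sqrt (2 * A y) := by
      intro x
      calc |u (x, y)| = Real.sqrt ((u (x, y)) ^ 2) := (Real.sqrt_sq_eq_abs _).symm
        _ ≤ Real.sqrt (2 * A y) := Real.sqrt_le_sqrt (sq_le_two_int u x y)
    have hint1 : Integrable (fun x => |u (x, y)| ^ 3) volume := by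
      refine ((line_integrable (mulS (mulS u u) u) y).abs).congr ?_
      filter_upwards with x
      show |u (x, y) * u (x, y) * u (x, y)| = |u (x, y)| ^ 3
      rw [abs_mul, abs_mul]; ring
    have hint2 : Integrable (fun x => Real.sqrt (2 * A y) * (u (x, y)) ^ 2) volume := by
      refine (((line_integrable (mulS u u) y).congr ?_).const_mul _)
      filter_upwards with x; simp [sq]
    have hle : ∀ x, |u (x, y)| ^ 3 ≤ Real.sqrt (2 * A y) * (u (x, y)) ^ 2 := by
      intro x
      calc |u (x, y)| ^ 3 = |u (x, y)| * |u (x, y)| ^ 2 := by ring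
        _ = |u (x, y)| * (u (x, y)) ^ 2 := by rw [sq_abs]
        _ ≤ Real.sqrt (2 * A y) * (u (x, y)) ^ 2 :=
            mul_le_mul_of_nonneg_right (hub x) (sq_nonneg _)
    calc (∫ x, |u (x, y)| ^ 3) ≤ ∫ x, Real.sqrt (2 * A y) * (u (x, y)) ^ 2 :=
          integral_mono hint1 hint2 hle
      _ = Real.sqrt (2 * A y) * hY y := MeasureTheory.integral_const_mul _ _
  -- φ and its integral
  set φ : ℝ → ℝ := fun y => Real.sqrt (A y) * Real.sqrt (hY y) with hφdef
  have hφ0 : ∀ y, 0 ≤ φ y := fun y => mul_nonneg (Real.sqrt_nonneg _) (Real.sqrt_nonneg _)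
  have hφle : ∀ y, φ y ≤ A y + hY y := by
    intro y
    show Real.sqrt (A y) * Real.sqrt (hY y) ≤ A y + hY y
    nlinarith [sq_nonneg (Real.sqrt (A y) - Real.sqrt (hY y)), Real.sq_sqrt (hA0 y),
      Real.sq_sqrt (hhY0 y), Real.sqrt_nonneg (A y), Real.sqrt_nonneg (hY y)]
  have hφmeas : AEStronglyMeasurable φ volume := by
    exact ((Real.continuous_sqrt.comp_aestronglyMeasurable hAint.1).mul
      (Real.continuous_sqrt.comp_aestronglyMeasurable hhYint.1))
  have hφint : Integrable φ volume := by
    refine Integrable.mono' (hAint.add hhYint) hφmeas ?_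
    filter_upwards with y
    rw [Real.norm_eq_abs, abs_of_nonneg (hφ0 y)]
    exact hφle y
  set Jφ : ℝ := ∫ y, φ y with hJdef
  have hJ0 : 0 ≤ Jφ := integral_nonneg hφ0
  -- Jφ² ≤ a * P
  have hJ2 : Jφ ^ 2 ≤ a * P := by
    have h1 : Integrable (fun y => (Real.sqrt (A y)) ^ 2) volume :=
      hAint.congr (by filter_upwards with y; rw [Real.sq_sqrt (hA0 y)])
    have h2 : Integrable (fun y => (Real.sqrt (hY y)) ^ 2) volume :=
      hhYint.congr (by filter_upwards with y; rw [Real.sq_sqrt (hhY0 y)])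
    have h3 : Integrable (fun y => |Real.sqrt (A y) * Real.sqrt (hY y)|) volume :=
      hφint.congr (by filter_upwards with y; rw [abs_of_nonneg (hφ0 y)])
    have := cs_abs (μ := (volume : Measure ℝ)) (fun y => Real.sqrt (A y))
      (fun y => Real.sqrt (hY y)) h1 h2 h3
    have e1 : (∫ y, |Real.sqrt (A y) * Real.sqrt (hY y)|) = Jφ :=
      integral_congr_ae (by filter_upwards with y; rw [abs_of_nonneg (hφ0 y)])
    have e2 : (∫ y, (Real.sqrt (A y)) ^ 2) = a := by
      rw [← hAa]; exact integral_congr_ae (by filter_upwards with y; rw [Real.sq_sqrt (hA0 y)])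
    have e3 : (∫ y, (Real.sqrt (hY y)) ^ 2) = P := by
      rw [← hhYP]; exact integral_congr_ae (by filter_upwards with y; rw [Real.sq_sqrt (hhY0 y)])
    rw [e1, e2, e3] at this
    exact this
  -- I ≤ √2 √(2b) Jφ
  have hIle : I ≤ Real.sqrt 2 * Real.sqrt (2 * b) * Jφ := by
    have hIeq : I = ∫ y, ∫ x, |u (x, y)| ^ 3 := by
      rw [hIdef, fubini_symm (fun p : ℝ × ℝ => |u p| ^ 3)]
      rw [← Measure.volume_eq_prod]; exact hicube
    rw [hIeq]
    have hpt : ∀ y, (∫ x, |u (x, y)| ^ 3) ≤ Real.sqrt 2 * Real.sqrt (2 * b) * φ y := by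
      intro y
      refine (cube_slice y).trans ?_
      have e1 : Real.sqrt (2 * A y) = Real.sqrt 2 * Real.sqrt (A y) :=
        Real.sqrt_mul (by norm_num) _
      have e2 : hY y = Real.sqrt (hY y) * Real.sqrt (hY y) :=
        (Real.mul_self_sqrt (hhY0 y)).symm
      have e3 : Real.sqrt (hY y) ≤ Real.sqrt (2 * b) := Real.sqrt_le_sqrt (hhYb y)
      calc Real.sqrt (2 * A y) * hY y
          = Real.sqrt 2 * Real.sqrt (A y) * (Real.sqrt (hY y) * Real.sqrt (hY y)) := by
            rw [← e2, ← e1]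
        _ ≤ Real.sqrt 2 * Real.sqrt (A y) * (Real.sqrt (2 * b) * Real.sqrt (hY y)) := by
            refine mul_le_mul_of_nonneg_left ?_ (by positivity)
            exact mul_le_mul_of_nonneg_right e3 (Real.sqrt_nonneg _)
        _ = Real.sqrt 2 * Real.sqrt (2 * b) * φ y := by rw [hφdef]; ring
    calc (∫ y, ∫ x, |u (x, y)| ^ 3) ≤ ∫ y, Real.sqrt 2 * Real.sqrt (2 * b) * φ y := by
          refine integral_mono_of_nonneg ?_ ((hφint.const_mul _)) ?_
          · filter_upwards with y; exact integral_nonneg fun x => by positivity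
          · filter_upwards with y; exact hpt y
      _ = Real.sqrt 2 * Real.sqrt (2 * b) * Jφ := MeasureTheory.integral_const_mul _ _
  -- I² ≤ 4 b a P
  have hI2 : I ^ 2 ≤ 4 * b * a * P := by
    have hc0 : 0 ≤ Real.sqrt 2 * Real.sqrt (2 * b) := by positivity
    have h1 : I ^ 2 ≤ (Real.sqrt 2 * Real.sqrt (2 * b) * Jφ) ^ 2 := by
      have hrhs : 0 ≤ Real.sqrt 2 * Real.sqrt (2 * b) * Jφ := mul_nonneg hc0 hJ0
      nlinarith [hIle, hI0]
    have h2 : (Real.sqrt 2 * Real.sqrt (2 * b) * Jφ) ^ 2 = 2 * (2 * b) * Jφ ^ 2 := by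
      have e1 : (Real.sqrt 2) ^ 2 = 2 := Real.sq_sqrt (by norm_num)
      have e2 : (Real.sqrt (2 * b)) ^ 2 = 2 * b := Real.sq_sqrt (by linarith)
      rw [mul_pow, mul_pow, e1, e2]
    rw [h2] at h1
    calc I ^ 2 ≤ 2 * (2 * b) * Jφ ^ 2 := h1
      _ ≤ 2 * (2 * b) * (a * P) := by
          refine mul_le_mul_of_nonneg_left hJ2 (by linarith)
      _ = 4 * b * a * P := by ring
  exact final_ineq hI0 hP0 hQ0 hR0 ha0 hb0 hI2 ha2 hb2

end
end
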